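/- arXiv:1603.07455 — 6 statements merged into one kernel-verified Lean document; each statement's English description precedes it below -/
import Mathlib

section
/- For all positive integers j, k, ℓ, the inequality (√(min(j,k)) / (√(min(j,k)) + |j-k|)) · (√(min(ℓ,k)) / (√(min(ℓ,k)) + |ℓ-k|)) ≤ √(min(j,ℓ)) / (√(min(j,ℓ)) + |j-ℓ|) holds. -/
private lemma key_frac (a b c p q r : ℝ) (ha : 0 < a) (hb : 0 < b) (hc : 0 < c)
    (hp : 0 ≤ p) (hq : 0 ≤ q) (hr : 0 ≤ r)
    (h : a * b * r ≤ a * c * q + b * c * p + c * p * q) :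
    a / (a + p) * (b / (b + q)) ≤ c / (c + r) := by
  rw [div_mul_div_comm, div_le_div_iff₀ (by positivity) (by positivity)]
  nlinarith [h]

private lemma aux_stmt (j k l : ℕ) (hj : 0 < j) (hk : 0 < k) (hl : 0 < l) (hjl : (j : ℝ) ≤ l) :
    (Real.sqrt (min (j : ℝ) (k : ℝ)) / (Real.sqrt (min (j : ℝ) (k : ℝ)) + |(j : ℝ) - (k : ℝ)|)) *
      (Real.sqrt (min (l : ℝ) (k : ℝ)) / (Real.sqrt (min (l : ℝ) (k : ℝ)) + |(l : ℝ) - (k : ℝ)|)) ≤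
    Real.sqrt (min (j : ℝ) (l : ℝ)) / (Real.sqrt (min (j : ℝ) (l : ℝ)) + |(j : ℝ) - (l : ℝ)|) := by
  have hJ : (1 : ℝ) ≤ (j : ℝ) := by exact_mod_cast hj
  have hK : (1 : ℝ) ≤ (k : ℝ) := by exact_mod_cast hk
  have hL : (1 : ℝ) ≤ (l : ℝ) := by exact_mod_cast hl
  have hsj : Real.sqrt j * Real.sqrt j = (j : ℝ) := Real.mul_self_sqrt (by linarith)
  have hsk : Real.sqrt k * Real.sqrt k = (k : ℝ) := Real.mul_self_sqrt (by linarith)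
  have hsl : Real.sqrt l * Real.sqrt l = (l : ℝ) := Real.mul_self_sqrt (by linarith)
  have hsj1 : (1 : ℝ) ≤ Real.sqrt j := by
    rw [show (1:ℝ) = Real.sqrt 1 by simp]; exact Real.sqrt_le_sqrt hJ
  have hsk1 : (1 : ℝ) ≤ Real.sqrt k := by
    rw [show (1:ℝ) = Real.sqrt 1 by simp]; exact Real.sqrt_le_sqrt hK
  have hsl1 : (1 : ℝ) ≤ Real.sqrt l := by
    rw [show (1:ℝ) = Real.sqrt 1 by simp]; exact Real.sqrt_le_sqrt hL
  rcases le_total (k : ℝ) (j : ℝ) with hkj | hjk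
  · -- k ≤ j ≤ l
    have hkl : (k : ℝ) ≤ l := le_trans hkj hjl
    rw [min_eq_right hkj, min_eq_right hkl, min_eq_left hjl,
        abs_of_nonneg (by linarith : (0:ℝ) ≤ (j:ℝ) - k),
        abs_of_nonneg (by linarith : (0:ℝ) ≤ (l:ℝ) - k),
        abs_of_nonpos (by linarith : (j:ℝ) - l ≤ 0), neg_sub]
    have hskj : Real.sqrt k ≤ Real.sqrt j := Real.sqrt_le_sqrt hkj
    apply key_frac _ _ _ _ _ _ (by linarith) (by linarith) (by linarith)
      (by linarith) (by linarith) (by linarith)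
    nlinarith [mul_nonneg (by linarith : (0:ℝ) ≤ Real.sqrt j) (by linarith : (0:ℝ) ≤ (j:ℝ) - k),
      mul_nonneg (mul_nonneg (by linarith : (0:ℝ) ≤ Real.sqrt j)
        (by linarith : (0:ℝ) ≤ (j:ℝ) - k)) (by linarith : (0:ℝ) ≤ (l:ℝ) - k),
      mul_le_mul_of_nonneg_right (mul_le_mul_of_nonneg_right hskj
        (by linarith : (0:ℝ) ≤ Real.sqrt k)) (by linarith : (0:ℝ) ≤ (l:ℝ) - k)]
  · rcases le_total (k : ℝ) (l : ℝ) with hkl | hlk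
    · -- j ≤ k ≤ l
      rw [min_eq_left hjk, min_eq_right hkl, min_eq_left hjl,
          abs_of_nonpos (by linarith : (j:ℝ) - k ≤ 0), neg_sub,
          abs_of_nonneg (by linarith : (0:ℝ) ≤ (l:ℝ) - k),
          abs_of_nonpos (by linarith : (j:ℝ) - l ≤ 0), neg_sub]
      have hskj : Real.sqrt j ≤ Real.sqrt k := Real.sqrt_le_sqrt hjk
      apply key_frac _ _ _ _ _ _ (by linarith) (by linarith) (by linarith)
        (by linarith) (by linarith) (by linarith)
      -- need: √j√k(l-j) ≤ √j√j(l-k) + √k√j(k-j) + √j(k-j)(l-k)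
      have hstep : Real.sqrt k - Real.sqrt j ≤ (k : ℝ) - j := by
        nlinarith
      nlinarith [mul_nonneg (by linarith : (0:ℝ) ≤ Real.sqrt j)
          (mul_nonneg (by linarith : (0:ℝ) ≤ (k:ℝ) - j) (by linarith : (0:ℝ) ≤ (l:ℝ) - k)),
        mul_le_mul_of_nonneg_right
          (mul_le_mul_of_nonneg_right hstep (by linarith : (0:ℝ) ≤ (l:ℝ) - k))
          (by linarith : (0:ℝ) ≤ Real.sqrt j)]
    · -- j ≤ l ≤ k
      rw [min_eq_left hjk, min_eq_left hlk, min_eq_left hjl,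
          abs_of_nonpos (by linarith : (j:ℝ) - k ≤ 0), neg_sub,
          abs_of_nonpos (by linarith : (l:ℝ) - k ≤ 0), neg_sub,
          abs_of_nonpos (by linarith : (j:ℝ) - l ≤ 0), neg_sub]
      have hslj : Real.sqrt j ≤ Real.sqrt l := Real.sqrt_le_sqrt hjl
      apply key_frac _ _ _ _ _ _ (by linarith) (by linarith) (by linarith)
        (by linarith) (by linarith) (by linarith)
      -- need: √j√l(l-j) ≤ √j√j(k-l) + √l√j(k-j) + √j(k-j)(k-l)
      nlinarith [mul_nonneg (by linarith : (0:ℝ) ≤ Real.sqrt j)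
          (mul_nonneg (by linarith : (0:ℝ) ≤ (k:ℝ) - j) (by linarith : (0:ℝ) ≤ (k:ℝ) - l)),
        mul_nonneg (mul_nonneg (by linarith : (0:ℝ) ≤ Real.sqrt j)
          (by linarith : (0:ℝ) ≤ Real.sqrt j)) (by linarith : (0:ℝ) ≤ (k:ℝ) - l),
        mul_le_mul_of_nonneg_right
          (mul_le_mul_of_nonneg_right hslj (by linarith : (0:ℝ) ≤ Real.sqrt l))
          (by linarith : (0:ℝ) ≤ (k:ℝ) - l),
        mul_le_mul_of_nonneg_left (by linarith : (l:ℝ) - j ≤ (k:ℝ) - j)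
          (mul_nonneg (by linarith : (0:ℝ) ≤ Real.sqrt j) (by linarith : (0:ℝ) ≤ Real.sqrt l))]

/-- Lemma A.1: for positive integers `j, k, ℓ`,
`(√min(j,k)/(√min(j,k)+|j-k|)) * (√min(ℓ,k)/(√min(ℓ,k)+|ℓ-k|)) ≤ √min(j,ℓ)/(√min(j,ℓ)+|j-ℓ|)`. -/
theorem stmt_0 (j k l : ℕ) (hj : 0 < j) (hk : 0 < k) (hl : 0 < l) :
    (Real.sqrt (min (j : ℝ) (k : ℝ)) / (Real.sqrt (min (j : ℝ) (k : ℝ)) + |(j : ℝ) - (k : ℝ)|)) *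
      (Real.sqrt (min (l : ℝ) (k : ℝ)) / (Real.sqrt (min (l : ℝ) (k : ℝ)) + |(l : ℝ) - (k : ℝ)|)) ≤
    Real.sqrt (min (j : ℝ) (l : ℝ)) / (Real.sqrt (min (j : ℝ) (l : ℝ)) + |(j : ℝ) - (l : ℝ)|) := by
  rcases le_total (j : ℝ) (l : ℝ) with h | h
  · exact aux_stmt j k l hj hk hl h
  · have := aux_stmt l k j hl hk hj h
    rw [min_comm (l:ℝ) (j:ℝ), abs_sub_comm (l:ℝ) (j:ℝ)] at this
    linarith [this, mul_comm
      (Real.sqrt (min (l : ℝ) (k : ℝ)) / (Real.sqrt (min (l : ℝ) (k : ℝ)) + |(l : ℝ) - (k : ℝ)|))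
      (Real.sqrt (min (j : ℝ) (k : ℝ)) / (Real.sqrt (min (j : ℝ) (k : ℝ)) + |(j : ℝ) - (k : ℝ)|))]
end

section
/- For every β > 0 there exists a constant C(β) > 0 such that for all natural numbers j, the sum over positive integers k of 1/(k^β (1 + |k - j|)) is bounded by C(β). -/
/-- Lemma A.2: for every `β > 0` there is `C(β) > 0` bounding, uniformly in `j : ℕ`,
the sum over positive integers `k` of `1/(k^β (1+|k-j|))`. -/
theorem stmt_1 (β : ℝ) (hβ : 0 < β) :
    ∃ C > 0, ∀ j : ℕ,
      ∑' k : ℕ+, 1 / ((k : ℝ) ^ β * (1 + |(k : ℝ) - (j : ℝ)|)) ≤ C := by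
  have hs1 : 1 < 1 + β := by linarith
  have hsum : Summable (fun n : ℕ => ((n : ℝ) ^ (1 + β))⁻¹) :=
    Real.summable_nat_rpow_inv.mpr hs1
  set Z := ∑' n : ℕ, ((n : ℝ) ^ (1 + β))⁻¹ with hZ
  have hZ0 : 0 ≤ Z := tsum_nonneg fun n => by positivity
  refine ⟨3 * Z + 1, by linarith, fun j => ?_⟩
  apply tsum_le_of_sum_le' (by linarith)
  intro S
  have hg : ∀ (T : Finset ℕ+) (i : ℕ+ → ℕ),
      (∀ a ∈ T, ∀ b ∈ T, i a = i b → a = b) →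
      ∑ k ∈ T, (((i k : ℕ) : ℝ) ^ (1 + β))⁻¹ ≤ Z := by
    intro T i hinj
    have heq : ∑ k ∈ T, (((i k : ℕ) : ℝ) ^ (1 + β))⁻¹
        = ∑ n ∈ T.image i, ((n : ℝ) ^ (1 + β))⁻¹ :=
      (Finset.sum_image (f := fun n : ℕ => ((n : ℝ) ^ (1 + β))⁻¹) (g := i) hinj).symm
    rw [heq]
    exact Summable.sum_le_tsum _ (fun n _ => by positivity) hsum
  have key : ∀ k : ℕ+, 1 / ((k : ℝ) ^ β * (1 + |(k : ℝ) - (j : ℝ)|)) ≤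
      ((k : ℝ) ^ (1 + β))⁻¹ + ((1 + |(k : ℝ) - (j : ℝ)|) ^ (1 + β))⁻¹ := by
    intro k
    have hx1 : (1 : ℝ) ≤ (k : ℝ) := by exact_mod_cast k.one_le
    have hx0 : (0 : ℝ) < (k : ℝ) := by linarith
    set x : ℝ := (k : ℝ) with hxdef
    set y : ℝ := 1 + |(k : ℝ) - (j : ℝ)| with hydef
    have hy1 : (1 : ℝ) ≤ y := by
      have := abs_nonneg ((k : ℝ) - (j : ℝ)); simp only [hydef]; linarith
    have hy0 : (0 : ℝ) < y := by linarith
    have h1 : 0 ≤ (x ^ (1 + β))⁻¹ := by positivity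
    have h2 : 0 ≤ (y ^ (1 + β))⁻¹ := by positivity
    have hxb : 0 ≤ x ^ β := Real.rpow_nonneg hx0.le β
    rw [one_div]
    rcases le_total x y with h | h
    · have hle : x ^ (1 + β) ≤ x ^ β * y := by
        rw [Real.rpow_add hx0, Real.rpow_one]
        nlinarith
      have : (x ^ β * y)⁻¹ ≤ (x ^ (1 + β))⁻¹ := by
        apply inv_anti₀ (Real.rpow_pos_of_pos hx0 _) hle
      linarith
    · have hyb : y ^ β ≤ x ^ β := Real.rpow_le_rpow hy0.le h hβ.le
      have hle : y ^ (1 + β) ≤ x ^ β * y := by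
        rw [Real.rpow_add hy0, Real.rpow_one]
        nlinarith
      have : (x ^ β * y)⁻¹ ≤ (y ^ (1 + β))⁻¹ := by
        apply inv_anti₀ (Real.rpow_pos_of_pos hy0 _) hle
      linarith
  have hsplit := Finset.sum_le_sum (fun k (_ : k ∈ S) => key k)
  rw [Finset.sum_add_distrib] at hsplit
  have hA : ∑ k ∈ S, ((k : ℝ) ^ (1 + β))⁻¹ ≤ Z := by
    have := hg S (fun k => (k : ℕ)) (fun a _ b _ h => PNat.coe_injective h)
    simpa using this
  have hB : ∑ k ∈ S, ((1 + |(k : ℝ) - (j : ℝ)|) ^ (1 + β))⁻¹ ≤ 2 * Z := by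
    rw [← Finset.sum_filter_add_sum_filter_not S (fun k : ℕ+ => (k : ℕ) ≤ j)]
    have hB1 : ∑ k ∈ S.filter (fun k : ℕ+ => (k : ℕ) ≤ j),
        ((1 + |(k : ℝ) - (j : ℝ)|) ^ (1 + β))⁻¹ ≤ Z := by
      have heq : ∀ k ∈ S.filter (fun k : ℕ+ => (k : ℕ) ≤ j),
          ((1 + |(k : ℝ) - (j : ℝ)|) ^ (1 + β))⁻¹
            = (((j + 1 - (k : ℕ) : ℕ) : ℝ) ^ (1 + β))⁻¹ := by
        intro k hk
        have hkj : (k : ℕ) ≤ j := (Finset.mem_filter.mp hk).2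
        have hkjR : ((k : ℕ) : ℝ) ≤ (j : ℝ) := by exact_mod_cast hkj
        have habs : |(k : ℝ) - (j : ℝ)| = (j : ℝ) - (k : ℝ) := by
          rw [abs_of_nonpos (by linarith)]; ring
        rw [habs]
        congr 1
        congr 1
        rw [Nat.cast_sub (by omega)]
        push_cast
        ring
      rw [Finset.sum_congr rfl heq]
      apply hg
      intro a ha b hb hab
      have haj : (a : ℕ) ≤ j := (Finset.mem_filter.mp ha).2
      have hbj : (b : ℕ) ≤ j := (Finset.mem_filter.mp hb).2
      have : (a : ℕ) = (b : ℕ) := by omega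
      exact PNat.coe_injective this
    have hB2 : ∑ k ∈ S.filter (fun k : ℕ+ => ¬ (k : ℕ) ≤ j),
        ((1 + |(k : ℝ) - (j : ℝ)|) ^ (1 + β))⁻¹ ≤ Z := by
      have heq : ∀ k ∈ S.filter (fun k : ℕ+ => ¬ (k : ℕ) ≤ j),
          ((1 + |(k : ℝ) - (j : ℝ)|) ^ (1 + β))⁻¹
            = ((((k : ℕ) - j + 1 : ℕ) : ℝ) ^ (1 + β))⁻¹ := by
        intro k hk
        have hkj : j < (k : ℕ) := by
          have := (Finset.mem_filter.mp hk).2; omega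
        have hkjR : (j : ℝ) ≤ ((k : ℕ) : ℝ) := by exact_mod_cast hkj.le
        have habs : |(k : ℝ) - (j : ℝ)| = (k : ℝ) - (j : ℝ) := by
          rw [abs_of_nonneg (by linarith)]
        rw [habs]
        congr 1
        congr 1
        rw [Nat.cast_add, Nat.cast_sub hkj.le]
        push_cast
        ring
      rw [Finset.sum_congr rfl heq]
      apply hg
      intro a ha b hb hab
      have haj : j < (a : ℕ) := by have := (Finset.mem_filter.mp ha).2; omega
      have hbj : j < (b : ℕ) := by have := (Finset.mem_filter.mp hb).2; omega
      have : (a : ℕ) = (b : ℕ) := by omega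
      exact PNat.coe_injective this
    linarith
  calc ∑ k ∈ S, 1 / ((k : ℝ) ^ β * (1 + |(k : ℝ) - (j : ℝ)|))
      ≤ ∑ k ∈ S, ((k : ℝ) ^ (1 + β))⁻¹
        + ∑ k ∈ S, ((1 + |(k : ℝ) - (j : ℝ)|) ^ (1 + β))⁻¹ := hsplit
    _ ≤ 3 * Z + 1 := by linarith
end

section
/- Let τ > n and for κ > 0 define G_τ(κ) = {ω ∈ [0,2π)^n : |⟨ω,k⟩ + j| ≥ κ/|k|^τ for all j ∈ ℤ and all k ∈ ℤ^n \ {0}}. Then the Lebesgue measure of [0,2π)^n \ G_τ(κ) is at most C(τ,n) κ for a constant C(τ,n) independent of κ. -/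
open Real MeasureTheory
open scoped ENNReal

lemma interval_meas {a : ℝ} (ha : a ≠ 0) (b ε : ℝ) :
    volume {t : ℝ | |t * a + b| < ε} = ENNReal.ofReal (|a⁻¹| * (2 * ε)) := by
  have : {t : ℝ | |t * a + b| < ε} = (· * a) ⁻¹' Set.Ioo (-b - ε) (-b + ε) := by
    ext t
    simp only [Set.mem_setOf_eq, Set.mem_preimage, Set.mem_Ioo, abs_lt]
    constructor <;> intro h <;> constructor <;> linarith [h.1, h.2]
  rw [this, Real.volume_preimage_mul_right ha, Real.volume_Ioo,
    ← ENNReal.ofReal_mul (abs_nonneg _)]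
  ring_nf

lemma fiber_bound {a : ℝ} (ha : 1 ≤ |a|) {ε : ℝ} (hε : 0 < ε) (hε1 : ε ≤ 1) (c : ℝ) :
    volume {t : ℝ | t ∈ Set.Ico (0:ℝ) (2 * π) ∧ ∃ j : ℤ, |t * a + c + j| < ε} ≤
      ENNReal.ofReal ((8 * π + 6) * ε) := by
  have ha0 : a ≠ 0 := fun h => by rw [h] at ha; norm_num at ha
  have hap : (0:ℝ) < |a| := lt_of_lt_of_le one_pos ha
  set l : ℤ := ⌈-c - 2 * π * |a| - 1⌉ with hl
  set u : ℤ := ⌊-c + 2 * π * |a| + 1⌋ with hu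
  have hsub : {t : ℝ | t ∈ Set.Ico (0:ℝ) (2 * π) ∧ ∃ j : ℤ, |t * a + c + j| < ε} ⊆
      ⋃ j ∈ Finset.Icc l u, {t : ℝ | |t * a + (c + j)| < ε} := by
    rintro t ⟨⟨ht0, ht2⟩, j, hj⟩
    have hta : |t * a| ≤ 2 * π * |a| := by
      rw [abs_mul, abs_of_nonneg ht0]
      exact mul_le_mul_of_nonneg_right (le_of_lt ht2) (abs_nonneg a)
    have habs := abs_lt.1 hj
    have hle := le_abs_self (t * a)
    have hge := neg_abs_le (t * a)
    have h1 : -c - 2 * π * |a| - 1 ≤ (j:ℝ) := by linarith [habs.1]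
    have h2 : (j:ℝ) ≤ -c + 2 * π * |a| + 1 := by linarith [habs.2]
    refine Set.mem_biUnion (Finset.mem_Icc.2 ⟨Int.ceil_le.2 h1, Int.le_floor.2 h2⟩)
      (show |t * a + (c + (j:ℝ))| < ε from by
        have : t * a + (c + (j:ℝ)) = t * a + c + j := by ring
        rw [this]; exact hj)
  have hcard : ((Finset.Icc l u).card : ℝ) ≤ 4 * π * |a| + 3 := by
    rcases le_or_gt l u with h | h
    · have h0 : (0:ℤ) ≤ u + 1 - l := by omega
      have e : ((u + 1 - l).toNat : ℝ) = (u:ℝ) + 1 - (l:ℝ) := by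
        rw [← Int.cast_natCast, Int.toNat_of_nonneg h0]; push_cast; ring
      rw [Int.card_Icc, e]
      have h1 : (-c - 2 * π * |a| - 1) ≤ (l:ℝ) := Int.le_ceil _
      have h2 : (u:ℝ) ≤ -c + 2 * π * |a| + 1 := Int.floor_le _
      linarith
    · rw [Int.card_Icc, Int.toNat_of_nonpos (by omega)]
      norm_num
      positivity
  calc volume _ ≤ volume (⋃ j ∈ Finset.Icc l u, {t : ℝ | |t * a + (c + j)| < ε}) :=
        measure_mono hsub
    _ ≤ ∑ j ∈ Finset.Icc l u, volume {t : ℝ | |t * a + (c + j)| < ε} :=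
        measure_biUnion_finset_le _ _
    _ = ∑ j ∈ Finset.Icc l u, ENNReal.ofReal (|a⁻¹| * (2 * ε)) := by
        refine Finset.sum_congr rfl fun j _ => interval_meas ha0 _ _
    _ = (Finset.Icc l u).card * ENNReal.ofReal (|a⁻¹| * (2 * ε)) := by
        rw [Finset.sum_const, nsmul_eq_mul]
    _ ≤ ENNReal.ofReal (4 * π * |a| + 3) * ENNReal.ofReal (|a⁻¹| * (2 * ε)) := by
        gcongr
        rw [← ENNReal.ofReal_natCast]
        exact ENNReal.ofReal_le_ofReal hcard
    _ = ENNReal.ofReal ((4 * π * |a| + 3) * (|a⁻¹| * (2 * ε))) := by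
        rw [← ENNReal.ofReal_mul (by positivity)]
    _ ≤ ENNReal.ofReal ((8 * π + 6) * ε) := by
        refine ENNReal.ofReal_le_ofReal ?_
        rw [abs_inv]
        have key : (4 * π * |a| + 3) * (|a|⁻¹ * (2 * ε)) =
            (4 * π + 3 * |a|⁻¹) * (2 * ε) := by
          field_simp
        rw [key]
        have hinv : |a|⁻¹ ≤ 1 := by
          rw [inv_le_one_iff₀]; right; exact ha
        nlinarith [pi_pos]

lemma slab_bound (m : ℕ) (k : Fin (m+1) → ℤ) (i₀ : Fin (m+1)) (hk : k i₀ ≠ 0)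
    {ε : ℝ} (hε : 0 < ε) (hε1 : ε ≤ 1) :
    volume ((Set.univ.pi fun _ : Fin (m+1) => Set.Ico (0:ℝ) (2*π)) ∩
      {ω : Fin (m+1) → ℝ | ∃ j : ℤ, |(∑ i, ω i * (k i : ℝ)) + (j:ℝ)| < ε}) ≤
    ENNReal.ofReal ((2*π)^m * ((8*π+6) * ε)) := by
  have ha : 1 ≤ |(k i₀ : ℝ)| := by
    have := Int.one_le_abs hk
    exact_mod_cast this
  set S := (Set.univ.pi fun _ : Fin (m+1) => Set.Ico (0:ℝ) (2*π)) ∩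
      {ω : Fin (m+1) → ℝ | ∃ j : ℤ, |(∑ i, ω i * (k i : ℝ)) + (j:ℝ)| < ε} with hSdef
  have hmeas_sum : Measurable fun ω : Fin (m+1) → ℝ => ∑ i, ω i * (k i:ℝ) :=
    Finset.measurable_sum _ fun i _ => (measurable_pi_apply i).mul_const _
  have hS : MeasurableSet S := by
    refine (MeasurableSet.univ_pi fun i => measurableSet_Ico).inter ?_
    have : {ω : Fin (m+1) → ℝ | ∃ j : ℤ, |(∑ i, ω i * (k i : ℝ)) + (j:ℝ)| < ε} =
        ⋃ j : ℤ, (fun ω : Fin (m+1) → ℝ => |(∑ i, ω i * (k i : ℝ)) + (j:ℝ)|) ⁻¹'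
          Set.Iio ε := by
      ext ω; simp [Set.mem_iUnion]
    rw [this]
    exact MeasurableSet.iUnion fun j =>
      (hmeas_sum.add_const _).abs measurableSet_Iio
  set e := MeasurableEquiv.piFinSuccAbove (fun _ : Fin (m+1) => ℝ) i₀ with hedef
  have mp := volume_preserving_piFinSuccAbove (fun _ : Fin (m+1) => ℝ) i₀
  set T := e.symm ⁻¹' S with hTdef
  have hT : MeasurableSet T := e.symm.measurable hS
  have h1 : volume T = volume S := (mp.symm e).measure_preimage hS.nullMeasurableSet
  have he : ∀ (x : ℝ) (y : Fin m → ℝ), e.symm (x, y) = i₀.insertNth x y := fun x y => rfl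
  have hfib : ∀ y : Fin m → ℝ, volume ((fun x => (x, y)) ⁻¹' T) ≤
      Set.indicator (Set.univ.pi fun _ : Fin m => Set.Ico (0:ℝ) (2*π))
        (fun _ => ENNReal.ofReal ((8*π+6) * ε)) y := by
    intro y
    by_cases hy : y ∈ Set.univ.pi fun _ : Fin m => Set.Ico (0:ℝ) (2*π)
    · rw [Set.indicator_of_mem hy]
      refine le_trans (measure_mono ?_)
        (fiber_bound ha hε hε1 (∑ j, y j * (k (i₀.succAbove j) : ℝ)))
      intro x hx
      have hx' : i₀.insertNth x y ∈ S := hx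
      obtain ⟨hbox, j, hj⟩ := hx'
      constructor
      · have := hbox i₀ (Set.mem_univ _)
        rwa [Fin.insertNth_apply_same] at this
      · refine ⟨j, ?_⟩
        have hsum : (∑ i, (Fin.insertNth (α := fun _ => ℝ) i₀ x y) i * (k i : ℝ)) =
            x * (k i₀ : ℝ) + ∑ j, y j * (k (i₀.succAbove j) : ℝ) := by
          rw [Fin.sum_univ_succAbove (fun i => (Fin.insertNth (α := fun _ => ℝ) i₀ x y) i * (k i : ℝ)) i₀]
          simp [Fin.insertNth_apply_same, Fin.insertNth_apply_succAbove]
        rw [hsum] at hj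
        exact hj
    · rw [Set.indicator_of_notMem hy]
      have hempty : ((fun x => (x, y)) ⁻¹' T) = ∅ := by
        ext x
        simp only [Set.mem_preimage, Set.mem_empty_iff_false, iff_false]
        intro hx
        have hx' : i₀.insertNth x y ∈ S := hx
        refine hy fun j _ => ?_
        have := hx'.1 (i₀.succAbove j) (Set.mem_univ _)
        rwa [Fin.insertNth_apply_succAbove] at this
      rw [hempty, measure_empty]
  calc volume S = volume T := h1.symm
    _ = ∫⁻ y, volume ((fun x => (x, y)) ⁻¹' T) := by
        rw [Measure.volume_eq_prod, Measure.prod_apply_symm hT]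
    _ ≤ ∫⁻ y, Set.indicator (Set.univ.pi fun _ : Fin m => Set.Ico (0:ℝ) (2*π))
        (fun _ => ENNReal.ofReal ((8*π+6) * ε)) y := lintegral_mono hfib
    _ = ENNReal.ofReal ((8*π+6) * ε) *
        volume (Set.univ.pi fun _ : Fin m => Set.Ico (0:ℝ) (2*π)) :=
        lintegral_indicator_const (MeasurableSet.univ_pi fun i => measurableSet_Ico) _
    _ = ENNReal.ofReal ((8*π+6) * ε) * ENNReal.ofReal (2*π) ^ m := by
        rw [volume_pi_pi]
        simp [Real.volume_Ico]
    _ = ENNReal.ofReal ((2*π)^m * ((8*π+6) * ε)) := by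
        rw [← ENNReal.ofReal_pow (by positivity), ← ENNReal.ofReal_mul (by positivity),
          mul_comm]

lemma int_sum_summable {s : ℝ} (hs : 1 < s) :
    Summable fun j : ℤ => (1 + |(j:ℝ)|) ^ (-s) := by
  have hg : Summable fun j : ℤ => |(j:ℝ)| ^ (-s) := Real.summable_abs_int_rpow hs
  have he : Summable fun j : ℤ => if j = 0 then (1:ℝ) else 0 :=
    (hasSum_ite_eq (0:ℤ) (1:ℝ)).summable
  refine Summable.of_nonneg_of_le (fun j => Real.rpow_nonneg (by positivity) _)
    (fun j => ?_) (hg.add he)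
  by_cases hj : j = 0
  · subst hj; simp
    positivity
  · have h0 : (0:ℝ) < |(j:ℝ)| := by
      simp only [abs_pos, ne_eq, Int.cast_eq_zero]; exact hj
    have : (1 + |(j:ℝ)|) ^ (-s) ≤ |(j:ℝ)| ^ (-s) :=
      Real.rpow_le_rpow_of_nonpos h0 (by linarith) (by linarith)
    simp only [hj, if_false, add_zero]
    exact this

lemma pi_tsum (n : ℕ) (h : ℤ → ℝ≥0∞) :
    (∑' k : Fin n → ℤ, ∏ i, h (k i)) = (∑' j : ℤ, h j) ^ n := by
  induction n with
  | zero =>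
    rw [pow_zero]
    rw [tsum_eq_single (fun i => (0:ℤ)) (fun b hb => absurd (Subsingleton.elim b _) hb)]
    simp
  | succ n ih =>
    rw [← (Fin.consEquiv fun _ : Fin (n+1) => ℤ).tsum_eq, pow_succ]
    have : ∀ p : ℤ × (Fin n → ℤ),
        (∏ i, h ((Fin.consEquiv fun _ : Fin (n+1) => ℤ) ⟨p.1, p.2⟩ i)) =
          h p.1 * ∏ i, h (p.2 i) := by
      intro p
      rw [Fin.prod_univ_succ]
      simp [Fin.consEquiv]
    calc (∑' p : ℤ × (Fin n → ℤ), ∏ i, h ((Fin.consEquiv fun _ : Fin (n+1) => ℤ) p i))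
        = ∑' p : ℤ × (Fin n → ℤ), h p.1 * ∏ i, h (p.2 i) := by
          refine tsum_congr fun p => ?_
          rw [← this p]
      _ = ∑' a : ℤ, ∑' b : Fin n → ℤ, h a * ∏ i, h (b i) := ENNReal.tsum_prod'
      _ = ∑' a : ℤ, h a * ∑' b : Fin n → ℤ, ∏ i, h (b i) := by
          refine tsum_congr fun a => ?_
          exact ENNReal.tsum_mul_left
      _ = (∑' j : ℤ, h j) * (∑' j : ℤ, h j) ^ n := by
          rw [ENNReal.tsum_mul_right, ih]
      _ = (∑' j : ℤ, h j) ^ n * (∑' j : ℤ, h j) := by ring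

lemma lattice_sum (n : ℕ) (hn : 1 ≤ n) {τ : ℝ} (hτ : (n:ℝ) < τ) :
    (∑' k : Fin n → ℤ, if k = 0 then (0:ℝ≥0∞) else
        ENNReal.ofReal (((∑ i, |((k i : ℤ) : ℝ)|) ^ τ)⁻¹)) ≠ ⊤ := by
  have hn0 : (0:ℝ) < n := by exact_mod_cast hn
  have hτ0 : (0:ℝ) < τ := hn0.trans hτ
  set s : ℝ := τ / n with hsdef
  have hs : 1 < s := (one_lt_div hn0).2 hτ
  set h : ℤ → ℝ≥0∞ := fun j => ENNReal.ofReal ((1 + |(j:ℝ)|) ^ (-s)) with hhdef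
  have hterm : ∀ k : Fin n → ℤ,
      (if k = 0 then (0:ℝ≥0∞) else ENNReal.ofReal (((∑ i, |((k i : ℤ) : ℝ)|) ^ τ)⁻¹)) ≤
        ENNReal.ofReal (2 ^ τ) * ∏ i, h (k i) := by
    intro k
    by_cases hk : k = 0
    · simp [hk]
    · rw [if_neg hk]
      set N : ℝ := ∑ i, |((k i : ℤ) : ℝ)| with hNdef
      obtain ⟨i₀, hi₀⟩ := Function.ne_iff.1 hk
      have hki : (1:ℝ) ≤ |((k i₀ : ℤ) : ℝ)| := by exact_mod_cast Int.one_le_abs hi₀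
      have habsle : ∀ i, |((k i : ℤ) : ℝ)| ≤ N := fun i => by
        rw [hNdef]
        exact Finset.single_le_sum (f := fun i => |((k i : ℤ) : ℝ)|)
          (fun i _ => abs_nonneg _) (Finset.mem_univ i)
      have hN1 : (1:ℝ) ≤ N := le_trans hki (habsle i₀)
      have hN0 : (0:ℝ) < N := lt_of_lt_of_le one_pos hN1
      have hP0 : (0:ℝ) < ∏ i, (1 + |((k i : ℤ) : ℝ)|) :=
        Finset.prod_pos fun i _ => by positivity
      have hP : (∏ i, (1 + |((k i : ℤ) : ℝ)|)) ≤ (2*N)^(n:ℕ) := by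
        calc (∏ i, (1 + |((k i : ℤ) : ℝ)|)) ≤ ∏ _i : Fin n, 2*N :=
              Finset.prod_le_prod (fun i _ => by positivity)
                (fun i _ => by linarith [habsle i])
          _ = (2*N)^(n:ℕ) := by rw [Finset.prod_const, Finset.card_univ, Fintype.card_fin]
      have key : ((N) ^ τ)⁻¹ ≤ 2 ^ τ * ∏ i, (1 + |((k i : ℤ) : ℝ)|) ^ (-s) := by
        have e1 : (∏ i, (1 + |((k i : ℤ) : ℝ)|) ^ (-s)) =
            (∏ i, (1 + |((k i : ℤ) : ℝ)|)) ^ (-s) :=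
          Real.finset_prod_rpow _ _ (fun i _ => by positivity) _
        have e2 : ((2*N)^(n:ℕ)) ^ (-s) ≤ (∏ i, (1 + |((k i : ℤ) : ℝ)|)) ^ (-s) :=
          Real.rpow_le_rpow_of_nonpos hP0 hP (by linarith)
        have e3 : ((2*N)^(n:ℕ)) ^ (-s) = 2 ^ (-τ) * N ^ (-τ) := by
          rw [← Real.rpow_natCast (2*N) n, ← Real.rpow_mul (by positivity)]
          have : (n:ℝ) * (-s) = -τ := by
            field_simp [hsdef]
            rw [hsdef]; field_simp [hn0.ne']
          rw [this, Real.mul_rpow (by norm_num) hN0.le]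
        have e4 : (N ^ τ)⁻¹ = N ^ (-τ) := by
          rw [Real.rpow_neg hN0.le]
        have e5 : (2:ℝ) ^ τ * 2 ^ (-τ) = 1 := by
          rw [← Real.rpow_add two_pos]; simp
        calc (N ^ τ)⁻¹ = 2 ^ τ * (2 ^ (-τ) * N ^ (-τ)) := by
              rw [← mul_assoc, e5, one_mul, e4]
          _ = 2 ^ τ * ((2*N)^(n:ℕ)) ^ (-s) := by rw [e3]
          _ ≤ 2 ^ τ * (∏ i, (1 + |((k i : ℤ) : ℝ)|)) ^ (-s) := by
              have h2 : (0:ℝ) ≤ 2 ^ τ := Real.rpow_nonneg (by norm_num) _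
              exact mul_le_mul_of_nonneg_left e2 h2
          _ = 2 ^ τ * ∏ i, (1 + |((k i : ℤ) : ℝ)|) ^ (-s) := by rw [e1]
      calc ENNReal.ofReal ((N ^ τ)⁻¹) ≤
          ENNReal.ofReal (2 ^ τ * ∏ i, (1 + |((k i : ℤ) : ℝ)|) ^ (-s)) :=
            ENNReal.ofReal_le_ofReal key
        _ = ENNReal.ofReal (2 ^ τ) *
            ENNReal.ofReal (∏ i, (1 + |((k i : ℤ) : ℝ)|) ^ (-s)) :=
            ENNReal.ofReal_mul (Real.rpow_nonneg (by norm_num) _)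
        _ = ENNReal.ofReal (2 ^ τ) * ∏ i, h (k i) := by
            rw [ENNReal.ofReal_prod_of_nonneg (fun i _ => Real.rpow_nonneg (by positivity) _)]
  have hsum : (∑' j : ℤ, h j) ≠ ⊤ := by
    rw [hhdef, ← ENNReal.ofReal_tsum_of_nonneg
      (fun j => Real.rpow_nonneg (by positivity) _) (int_sum_summable hs)]
    exact ENNReal.ofReal_ne_top
  refine ne_top_of_le_ne_top ?_ (ENNReal.tsum_le_tsum hterm)
  rw [ENNReal.tsum_mul_left, pi_tsum n h]
  exact ENNReal.mul_ne_top ENNReal.ofReal_ne_top (ENNReal.pow_ne_top hsum)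


/-- For `τ > n`, the complement in `[0,2π)^n` of the diophantine set
`G_τ(κ) = {ω : |⟨ω,k⟩ + j| ≥ κ/|k|^τ for all j ∈ ℤ, k ∈ ℤ^n \ {0}}`
has Lebesgue measure at most `C(τ,n) κ`. -/
theorem stmt_4 (n : ℕ) (hn : 1 ≤ n) (τ : ℝ) (hτ : (n : ℝ) < τ) :
    ∃ C > 0, ∀ κ : ℝ, 0 < κ →
      volume ((Set.univ.pi fun _ : Fin n => Set.Ico (0 : ℝ) (2 * π)) \
        {ω : Fin n → ℝ | ∀ (j : ℤ) (k : Fin n → ℤ), k ≠ 0 →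
          κ / (∑ i, |(k i : ℝ)|) ^ τ ≤ |(∑ i, ω i * (k i : ℝ)) + (j : ℝ)|}) ≤
        ENNReal.ofReal (C * κ) := by
  obtain ⟨m, rfl⟩ : ∃ m, n = m + 1 := ⟨n - 1, by omega⟩
  have hτ0 : (0:ℝ) < τ := by
    have : (0:ℝ) < ((m:ℕ) + 1 : ℕ) := by positivity
    exact lt_of_lt_of_le (by exact_mod_cast this) hτ.le
  set B := ∑' k : Fin (m+1) → ℤ, if k = 0 then (0:ℝ≥0∞) else
      ENNReal.ofReal (((∑ i, |((k i : ℤ) : ℝ)|) ^ τ)⁻¹) with hBdef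
  have hBne : B ≠ ⊤ := lattice_sum (m+1) (by omega) hτ
  set A : ℝ := (2*π)^m * (8*π+6) with hAdef
  have hA : 0 < A := by positivity
  refine ⟨A * B.toReal + (2*π)^(m+1) + 1, by positivity, ?_⟩
  intro κ hκ
  set box := Set.univ.pi fun _ : Fin (m+1) => Set.Ico (0 : ℝ) (2 * π) with hboxdef
  have hboxvol : volume box = ENNReal.ofReal ((2*π)^(m+1)) := by
    rw [hboxdef, volume_pi_pi]
    simp [Real.volume_Ico, ← ENNReal.ofReal_pow Real.two_pi_pos.le]
    rw [ENNReal.ofReal_pow Real.two_pi_pos.le, ENNReal.ofReal_mul (by norm_num)]; simp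
  rcases le_or_gt κ 1 with hκ1 | hκ1
  · -- small κ : the real estimate
    set f : (Fin (m+1) → ℤ) → Set (Fin (m+1) → ℝ) := fun k =>
      box ∩ {ω | k ≠ 0 ∧ ∃ j : ℤ,
        |(∑ i, ω i * (k i : ℝ)) + (j:ℝ)| < κ / (∑ i, |(k i : ℝ)|) ^ τ} with hfdef
    have hcover : (box \ {ω : Fin (m+1) → ℝ | ∀ (j : ℤ) (k : Fin (m+1) → ℤ), k ≠ 0 →
        κ / (∑ i, |(k i : ℝ)|) ^ τ ≤ |(∑ i, ω i * (k i : ℝ)) + (j : ℝ)|}) ⊆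
        ⋃ k, f k := by
      rintro ω ⟨hbox, hG⟩
      simp only [Set.mem_setOf_eq, not_forall] at hG
      obtain ⟨j, k, hk, hlt⟩ := hG
      exact Set.mem_iUnion.2 ⟨k, hbox, hk, j, not_le.1 hlt⟩
    have hvol : ∀ k : Fin (m+1) → ℤ, volume (f k) ≤ ENNReal.ofReal (A * κ) *
        (if k = 0 then (0:ℝ≥0∞) else
          ENNReal.ofReal (((∑ i, |((k i : ℤ) : ℝ)|) ^ τ)⁻¹)) := by
      intro k
      by_cases hk : k = 0
      · have : f k = ∅ := by
          rw [hfdef]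
          ext ω
          simp [hk]
        rw [this, measure_empty]
        exact zero_le
      · rw [if_neg hk]
        set N : ℝ := ∑ i, |((k i : ℤ) : ℝ)| with hNdef
        obtain ⟨i₀, hi₀⟩ := Function.ne_iff.1 hk
        have hki : (1:ℝ) ≤ |((k i₀ : ℤ) : ℝ)| := by exact_mod_cast Int.one_le_abs hi₀
        have hN1 : (1:ℝ) ≤ N := by
          refine le_trans hki ?_
          rw [hNdef]
          exact Finset.single_le_sum (f := fun i => |((k i : ℤ) : ℝ)|)
            (fun i _ => abs_nonneg _) (Finset.mem_univ i₀)
        have hNτpos : (0:ℝ) < N ^ τ := Real.rpow_pos_of_pos (by linarith) τ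
        have hNτ1 : (1:ℝ) ≤ N ^ τ := Real.one_le_rpow hN1 hτ0.le
        have hε : 0 < κ / N ^ τ := div_pos hκ hNτpos
        have hε1 : κ / N ^ τ ≤ 1 := (div_le_one hNτpos).2 (hκ1.trans hNτ1)
        have hsub : f k ⊆ box ∩ {ω : Fin (m+1) → ℝ | ∃ j : ℤ,
            |(∑ i, ω i * (k i : ℝ)) + (j:ℝ)| < κ / N ^ τ} :=
          fun ω hω => ⟨hω.1, hω.2.2⟩
        calc volume (f k) ≤ ENNReal.ofReal ((2*π)^m * ((8*π+6) * (κ / N ^ τ))) :=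
              le_trans (measure_mono hsub) (slab_bound m k i₀ hi₀ hε hε1)
          _ ≤ ENNReal.ofReal ((A * κ) * (N ^ τ)⁻¹) := by
              refine ENNReal.ofReal_le_ofReal (le_of_eq ?_)
              rw [hAdef, div_eq_mul_inv]
              ring
          _ = ENNReal.ofReal (A * κ) * ENNReal.ofReal ((N ^ τ)⁻¹) :=
              ENNReal.ofReal_mul (by positivity)
    calc volume _ ≤ volume (⋃ k, f k) := measure_mono hcover
      _ ≤ ∑' k : Fin (m+1) → ℤ, volume (f k) := measure_iUnion_le _
      _ ≤ ∑' k : Fin (m+1) → ℤ, ENNReal.ofReal (A * κ) *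
          (if k = 0 then (0:ℝ≥0∞) else
            ENNReal.ofReal (((∑ i, |((k i : ℤ) : ℝ)|) ^ τ)⁻¹)) :=
          ENNReal.tsum_le_tsum hvol
      _ = ENNReal.ofReal (A * κ) * B := by rw [ENNReal.tsum_mul_left, hBdef]
      _ = ENNReal.ofReal (A * κ) * ENNReal.ofReal (B.toReal) := by
          rw [ENNReal.ofReal_toReal hBne]
      _ = ENNReal.ofReal ((A * κ) * B.toReal) := (ENNReal.ofReal_mul (by positivity)).symm
      _ ≤ ENNReal.ofReal ((A * B.toReal + (2*π)^(m+1) + 1) * κ) := by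
          refine ENNReal.ofReal_le_ofReal ?_
          have h1 : (0:ℝ) ≤ (2*π)^(m+1) + 1 := by positivity
          nlinarith
  · -- large κ : use the volume of the box
    calc volume _ ≤ volume box := measure_mono Set.diff_subset
      _ = ENNReal.ofReal ((2*π)^(m+1)) := hboxvol
      _ ≤ ENNReal.ofReal ((A * B.toReal + (2*π)^(m+1) + 1) * κ) := by
          refine ENNReal.ofReal_le_ofReal ?_
          have h1 : (0:ℝ) ≤ A * B.toReal := by positivity
          have h2 : (0:ℝ) < (2*π)^(m+1) := by positivity
          nlinarith
end

section
/- Let 0 < β ≤ 1 and define T(ξ)_a = Σ_b K(a,b) ξ_b for a, b ≥ 1, where K(a,b) = (ab)^{-β}(1+|a-b|)^{-1} (min(a,b)^{1/2}/(min(a,b)^{1/2}+|a-b|))^{s/2}. Then T maps ℓ²_{s'} boundedly into ℓ²_{s'+2β} for all 0 ≤ s' ≤ s, i.e. there is C(s,β) with Σ_a a^{s'+2β} (Σ_b K(a,b)|ξ_b|)² ≤ C Σ_b b^{s'}|ξ_b|². -/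
open scoped ENNReal
open ENNReal

section Stmt7Helpers

lemma pnat_one_le_cast (a : ℕ+) : (1:ℝ) ≤ (a:ℝ) := by exact_mod_cast a.one_le

lemma pnat_summable_rpow {w : ℝ} (hw : 1 < w) :
    Summable (fun n : ℕ+ => (n:ℝ) ^ (-w)) := by
  have h : Summable (fun n : ℕ => (n:ℝ) ^ (-w)) :=
    Real.summable_nat_rpow.2 (by linarith)
  exact h.comp_injective PNat.coe_injective

lemma tsum_cs (f g : ℕ+ → ℝ≥0∞) :
    (∑' i, f i * g i) ^ 2 ≤ (∑' i, f i ^ 2) * (∑' i, g i ^ 2) := by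
  have hpq : (2:ℝ).HolderConjugate 2 := by
    constructor <;> norm_num
  have key : ∑' i, f i * g i ≤
      ((∑' i, f i ^ 2) * (∑' i, g i ^ 2)) ^ ((1:ℝ)/2) := by
    refine Summable.tsum_le_of_sum_le ENNReal.summable fun s => ?_
    have h1 : ∑ i ∈ s, f i * g i ≤
        (∑ i ∈ s, f i ^ (2:ℝ)) ^ ((1:ℝ)/2) * (∑ i ∈ s, g i ^ (2:ℝ)) ^ ((1:ℝ)/2) :=
      ENNReal.inner_le_Lp_mul_Lq s f g hpq
    have h2 : (∑ i ∈ s, f i ^ (2:ℝ)) ^ ((1:ℝ)/2) ≤ (∑' i, f i ^ 2) ^ ((1:ℝ)/2) := by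
      apply ENNReal.rpow_le_rpow _ (by norm_num)
      simp_rw [← ENNReal.rpow_natCast _ 2]
      push_cast
      exact ENNReal.sum_le_tsum s
    have h3 : (∑ i ∈ s, g i ^ (2:ℝ)) ^ ((1:ℝ)/2) ≤ (∑' i, g i ^ 2) ^ ((1:ℝ)/2) := by
      apply ENNReal.rpow_le_rpow _ (by norm_num)
      simp_rw [← ENNReal.rpow_natCast _ 2]
      push_cast
      exact ENNReal.sum_le_tsum s
    calc ∑ i ∈ s, f i * g i ≤ _ := h1
      _ ≤ (∑' i, f i ^ 2) ^ ((1:ℝ)/2) * (∑' i, g i ^ 2) ^ ((1:ℝ)/2) :=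
          mul_le_mul' h2 h3
      _ = ((∑' i, f i ^ 2) * (∑' i, g i ^ 2)) ^ ((1:ℝ)/2) :=
          (ENNReal.mul_rpow_of_nonneg _ _ (by norm_num)).symm
  calc (∑' i, f i * g i) ^ 2 ≤ (((∑' i, f i ^ 2) * (∑' i, g i ^ 2)) ^ ((1:ℝ)/2)) ^ 2 := by
        gcongr
    _ = _ := by
        rw [← ENNReal.rpow_natCast _ 2, ← ENNReal.rpow_mul]
        norm_num

lemma min_trick {A B u v : ℝ} (hA : 1 ≤ A) (hB : 1 ≤ B) (hu : 0 ≤ u) (hv : 0 ≤ v) :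
    A ^ (-u) * B ^ (-v) ≤ A ^ (-(u+v)) + B ^ (-(u+v)) := by
  have hA0 : (0:ℝ) < A := lt_of_lt_of_le one_pos hA
  have hB0 : (0:ℝ) < B := lt_of_lt_of_le one_pos hB
  rcases le_total A B with h | h
  · have h1 : B ^ (-v) ≤ A ^ (-v) := Real.rpow_le_rpow_of_nonpos hA0 h (neg_nonpos.2 hv)
    have h2 : A ^ (-u) * B ^ (-v) ≤ A ^ (-u) * A ^ (-v) :=
      mul_le_mul_of_nonneg_left h1 (Real.rpow_nonneg hA0.le _)
    have h3 : A ^ (-u) * A ^ (-v) = A ^ (-(u+v)) := by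
      rw [← Real.rpow_add hA0]; ring_nf
    calc A ^ (-u) * B ^ (-v) ≤ A ^ (-(u+v)) := by rw [← h3]; exact h2
      _ ≤ _ := le_add_of_nonneg_right (Real.rpow_nonneg hB0.le _)
  · have h1 : A ^ (-u) ≤ B ^ (-u) := Real.rpow_le_rpow_of_nonpos hB0 h (neg_nonpos.2 hu)
    have h2 : A ^ (-u) * B ^ (-v) ≤ B ^ (-u) * B ^ (-v) :=
      mul_le_mul_of_nonneg_right h1 (Real.rpow_nonneg hB0.le _)
    have h3 : B ^ (-u) * B ^ (-v) = B ^ (-(u+v)) := by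
      rw [← Real.rpow_add hB0]; ring_nf
    calc A ^ (-u) * B ^ (-v) ≤ B ^ (-(u+v)) := by rw [← h3]; exact h2
      _ ≤ _ := le_add_of_nonneg_left (Real.rpow_nonneg hA0.le _)

-- ratio bound
lemma ratio_le_one {s t x y : ℝ} (ht0 : 0 ≤ t) (hts : t ≤ s) (hx : 1 ≤ x) (hy : 1 ≤ y) :
    x ^ (t/2) * y ^ (-(t/2)) *
      (Real.sqrt (min x y) / (Real.sqrt (min x y) + |x - y|)) ^ (s/2) ≤ 1 := by
  have hx0 : (0:ℝ) < x := lt_of_lt_of_le one_pos hx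
  have hy0 : (0:ℝ) < y := lt_of_lt_of_le one_pos hy
  have hs0 : 0 ≤ s := le_trans ht0 hts
  rcases le_total x y with hxy | hyx
  · -- x ≤ y : both factors ≤ 1
    have hmin : min x y = x := min_eq_left hxy
    have h1 : x ^ (t/2) * y ^ (-(t/2)) ≤ 1 := by
      rw [Real.rpow_neg hy0.le, ← div_eq_mul_inv, ← Real.div_rpow hx0.le hy0.le]
      exact Real.rpow_le_one (by positivity) ((div_le_one hy0).2 hxy) (by linarith)
    have hden : 0 < Real.sqrt (min x y) + |x - y| := by
      rw [hmin]; positivity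
    have h2 : (Real.sqrt (min x y) / (Real.sqrt (min x y) + |x - y|)) ^ (s/2) ≤ 1 := by
      refine Real.rpow_le_one (div_nonneg (Real.sqrt_nonneg _) hden.le) ?_ (by linarith)
      rw [div_le_one hden]
      exact le_add_of_nonneg_right (abs_nonneg _)
    calc _ ≤ 1 * 1 := mul_le_mul h1 h2 (by positivity) (by linarith [Real.rpow_nonneg hx0.le (t/2), Real.rpow_nonneg hy0.le (-(t/2))])
      _ = 1 := by ring
  · -- y ≤ x
    have hmin : min x y = y := min_eq_right hyx
    have habs : |x - y| = x - y := abs_of_nonneg (by linarith)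
    have hsy : Real.sqrt y ≤ y := by nlinarith [Real.sq_sqrt hy0.le, Real.one_le_sqrt.2 hy]
    have hsy0 : 0 < Real.sqrt y := Real.sqrt_pos.2 hy0
    have hden : 0 < Real.sqrt y + (x - y) := by linarith
    -- r ≤ y / x
    have hr : Real.sqrt y / (Real.sqrt y + (x - y)) ≤ y / x := by
      rw [div_le_div_iff₀ hden hx0]
      nlinarith [mul_le_mul_of_nonneg_right hsy (sub_nonneg.2 hyx)]
    have hr0 : 0 ≤ Real.sqrt y / (Real.sqrt y + (x - y)) := by positivity
    have h2 : (Real.sqrt y / (Real.sqrt y + (x - y))) ^ (s/2) ≤ (y/x) ^ (t/2) := by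
      calc (Real.sqrt y / (Real.sqrt y + (x - y))) ^ (s/2)
          ≤ (y/x) ^ (s/2) := Real.rpow_le_rpow hr0 hr (by linarith)
        _ ≤ (y/x) ^ (t/2) := Real.rpow_le_rpow_of_exponent_ge (by positivity)
            ((div_le_one hx0).2 hyx) (by linarith)
    have h1 : x ^ (t/2) * y ^ (-(t/2)) = (x/y) ^ (t/2) := by
      rw [Real.div_rpow hx0.le hy0.le, Real.rpow_neg hy0.le, ← div_eq_mul_inv]
    rw [hmin, habs, h1]
    calc (x/y) ^ (t/2) * (Real.sqrt y / (Real.sqrt y + (x - y))) ^ (s/2)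
        ≤ (x/y) ^ (t/2) * (y/x) ^ (t/2) :=
          mul_le_mul_of_nonneg_left h2 (Real.rpow_nonneg (by positivity) _)
      _ = ((x/y) * (y/x)) ^ (t/2) := (Real.mul_rpow (by positivity) (by positivity)).symm
      _ = 1 := by
          rw [div_mul_div_comm, mul_comm]
          rw [div_self (by positivity)]
          exact Real.one_rpow _

lemma rpow_merge {x : ℝ} (hx : 0 < x) (p q r : ℝ) (h : p + q = r) :
    x ^ p * x ^ q = x ^ r := by rw [← Real.rpow_add hx, h]

-- P1
lemma kernel_bound {s β t x y : ℝ} (ht0 : 0 ≤ t) (hts : t ≤ s) (hβ : 0 < β)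
    (hx : 1 ≤ x) (hy : 1 ≤ y) :
    x ^ ((t+2*β)/2) * ((x*y) ^ (-β) * (1+|x-y|)⁻¹ *
      (Real.sqrt (min x y) / (Real.sqrt (min x y) + |x - y|)) ^ (s/2)) * y ^ (-(t/2)) ≤
    y ^ (-β) * (1+|x-y|)⁻¹ := by
  have hx0 : (0:ℝ) < x := lt_of_lt_of_le one_pos hx
  have hy0 : (0:ℝ) < y := lt_of_lt_of_le one_pos hy
  have hD : (0:ℝ) < 1+|x-y| := by positivity
  have hxx : x ^ ((t+2*β)/2) * x ^ (-β) = x ^ (t/2) := rpow_merge hx0 _ _ _ (by ring)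
  have e1 : x ^ ((t+2*β)/2) * ((x*y) ^ (-β) * (1+|x-y|)⁻¹ *
      (Real.sqrt (min x y) / (Real.sqrt (min x y) + |x - y|)) ^ (s/2)) * y ^ (-(t/2))
      = ((x ^ ((t+2*β)/2) * x ^ (-β)) * y ^ (-(t/2)) *
          (Real.sqrt (min x y) / (Real.sqrt (min x y) + |x - y|)) ^ (s/2)) *
        (y ^ (-β) * (1+|x-y|)⁻¹) := by
    rw [Real.mul_rpow hx0.le hy0.le]; ring
  rw [e1, hxx]
  calc _ ≤ 1 * (y ^ (-β) * (1+|x-y|)⁻¹) := by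
        apply mul_le_mul_of_nonneg_right (ratio_le_one ht0 hts hx hy)
        positivity
    _ = _ := one_mul _

-- P2 (row)
lemma row_pointwise {β x y : ℝ} (hβ0 : 0 < β) (hβ1 : β ≤ 1) (hx : 1 ≤ x) (hy : 1 ≤ y) :
    y ^ (-β) * (1+|x-y|)⁻¹ * y ^ (-(β/2)) ≤
      x ^ (-(β/2)) * ((y ^ (-(1+β/2)) + (1+|x-y|) ^ (-(1+β/2)))) := by
  have hx0 : (0:ℝ) < x := lt_of_lt_of_le one_pos hx
  have hy0 : (0:ℝ) < y := lt_of_lt_of_le one_pos hy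
  have hD : (1:ℝ) ≤ 1+|x-y| := le_add_of_nonneg_right (abs_nonneg _)
  have hD0 : (0:ℝ) < 1+|x-y| := lt_of_lt_of_le one_pos hD
  have hinv : (1+|x-y|)⁻¹ = (1+|x-y|) ^ (-(1:ℝ)) := (Real.rpow_neg_one _).symm
  have e1 : y ^ (-β) * (1+|x-y|)⁻¹ * y ^ (-(β/2)) =
      (y ^ (-(β/2)) * (1+|x-y|) ^ (-(β/2))) * (y ^ (-β) * (1+|x-y|) ^ (-(1-β/2))) := by
    rw [hinv]
    rw [show (y ^ (-(β/2)) * (1+|x-y|) ^ (-(β/2))) * (y ^ (-β) * (1+|x-y|) ^ (-(1-β/2)))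
        = (y ^ (-(β/2)) * y ^ (-β)) * ((1+|x-y|) ^ (-(β/2)) * (1+|x-y|) ^ (-(1-β/2))) by ring]
    rw [rpow_merge hy0 _ _ (-(β/2) + -β) rfl, rpow_merge hD0 _ _ _ (show -(β/2) + -(1-β/2) = -(1:ℝ) by ring)]
    rw [mul_right_comm, rpow_merge hy0 (-β) (-(β/2)) (-(β/2) + -β) (by ring)]
  have step1 : y ^ (-(β/2)) * (1+|x-y|) ^ (-(β/2)) ≤ x ^ (-(β/2)) := by
    rw [← Real.mul_rpow hy0.le hD0.le]
    apply Real.rpow_le_rpow_of_nonpos hx0 _ (by linarith)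
    nlinarith [le_abs_self (x - y), abs_nonneg (x - y)]
  have step2 : y ^ (-β) * (1+|x-y|) ^ (-(1-β/2)) ≤ y ^ (-(1+β/2)) + (1+|x-y|) ^ (-(1+β/2)) := by
    have := min_trick hy hD (u := β) (v := 1-β/2) hβ0.le (by linarith)
    rwa [show -(β + (1-β/2)) = -(1+β/2) by ring] at this
  rw [e1]
  calc _ ≤ x ^ (-(β/2)) * (y ^ (-β) * (1+|x-y|) ^ (-(1-β/2))) := by
        apply mul_le_mul_of_nonneg_right step1
        positivity
    _ ≤ _ := by
        apply mul_le_mul_of_nonneg_left step2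
        positivity

-- P3 (column)
lemma col_pointwise {β x y : ℝ} (hβ0 : 0 < β) (hβ1 : β ≤ 1) (hx : 1 ≤ x) (hy : 1 ≤ y) :
    y ^ (-β) * (1+|x-y|)⁻¹ * x ^ (-(β/2)) ≤
      y ^ (-(β/2)) * ((x ^ (-(1+β/2)) + (1+|x-y|) ^ (-(1+β/2)))) := by
  have hx0 : (0:ℝ) < x := lt_of_lt_of_le one_pos hx
  have hy0 : (0:ℝ) < y := lt_of_lt_of_le one_pos hy
  have hD : (1:ℝ) ≤ 1+|x-y| := le_add_of_nonneg_right (abs_nonneg _)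
  have hD0 : (0:ℝ) < 1+|x-y| := lt_of_lt_of_le one_pos hD
  have hinv : (1+|x-y|)⁻¹ = (1+|x-y|) ^ (-(1:ℝ)) := (Real.rpow_neg_one _).symm
  have h1 : y ^ (-β) ≤ y ^ (-(β/2)) := Real.rpow_le_rpow_of_exponent_le hy (by linarith)
  have h2 : x ^ (-(β/2)) * (1+|x-y|) ^ (-(1:ℝ)) ≤ x ^ (-(1+β/2)) + (1+|x-y|) ^ (-(1+β/2)) := by
    have := min_trick hx hD (u := β/2) (v := 1) (by linarith) zero_le_one
    rwa [show -(β/2 + 1) = -(1+β/2) by ring] at this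
  rw [hinv, show y ^ (-β) * (1+|x-y|) ^ (-(1:ℝ)) * x ^ (-(β/2))
      = y ^ (-β) * (x ^ (-(β/2)) * (1+|x-y|) ^ (-(1:ℝ))) by ring]
  calc _ ≤ y ^ (-(β/2)) * (x ^ (-(β/2)) * (1+|x-y|) ^ (-(1:ℝ))) := by
        apply mul_le_mul_of_nonneg_right h1
        positivity
    _ ≤ _ := by
        apply mul_le_mul_of_nonneg_left h2
        positivity

lemma tsum_subtype_le' {S : Set ℕ+} (F : ℕ+ → ℝ≥0∞) (G : ℕ+ → ℝ≥0∞) (e : S → ℕ+)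
    (he : Function.Injective e) (hle : ∀ p : S, F p ≤ G (e p)) :
    ∑' p : S, F (p : ℕ+) ≤ ∑' n, G n :=
  (Summable.tsum_le_tsum hle ENNReal.summable ENNReal.summable).trans
    (tsum_comp_le_tsum_of_injective he G)

lemma shift_sum {w : ℝ} (hw : 0 ≤ w) (c : ℕ+) :
    ∑' n : ℕ+, ENNReal.ofReal ((1 + |(n:ℝ) - (c:ℝ)|) ^ (-w)) ≤
      2 * ∑' n : ℕ+, ENNReal.ofReal ((n:ℝ) ^ (-w)) := by
  set F : ℕ+ → ℝ≥0∞ := fun n => ENNReal.ofReal ((1 + |(n:ℝ) - (c:ℝ)|) ^ (-w)) with hF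
  set G : ℕ+ → ℝ≥0∞ := fun n => ENNReal.ofReal ((n:ℝ) ^ (-w)) with hG
  set S : Set ℕ+ := {n : ℕ+ | (n:ℕ) ≤ (c:ℕ)} with hS
  have split : (∑' n : S, F n) + ∑' n : (Sᶜ : Set ℕ+), F n = ∑' n, F n :=
    Summable.tsum_add_tsum_compl (s := S) ENNReal.summable ENNReal.summable
  rw [← split, two_mul]
  have part1 : (∑' n : S, F n) ≤ ∑' n, G n := by
    refine tsum_subtype_le' F G (fun p => ⟨(c:ℕ) + 1 - ((p:ℕ+):ℕ), by have : ((p:ℕ+):ℕ) ≤ (c:ℕ) := p.property; omega⟩)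
      ?_ ?_
    · rintro ⟨p, hp⟩ ⟨q, hq⟩ h
      have h' := congrArg (fun x : ℕ+ => (x:ℕ)) h
      simp only [PNat.mk_coe] at h'
      have hp' : (p:ℕ) ≤ (c:ℕ) := hp
      have hq' : (q:ℕ) ≤ (c:ℕ) := hq
      have hp0 : 0 < (p:ℕ) := p.2
      have hq0 : 0 < (q:ℕ) := q.2
      have h'' : (c:ℕ) + 1 - (p:ℕ) = (c:ℕ) + 1 - (q:ℕ) := h'
      apply Subtype.ext
      apply PNat.coe_injective
      show (p:ℕ) = (q:ℕ)
      omega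
    · rintro ⟨p, hp⟩
      have hp' : (p:ℕ) ≤ (c:ℕ) := hp
      apply le_of_eq
      simp only [hF, hG, PNat.mk_coe]
      have hcast : (((c:ℕ) + 1 - (p:ℕ) : ℕ) : ℝ) = (c:ℝ) + 1 - (p:ℝ) := by
        push_cast [Nat.cast_sub (by omega : (p:ℕ) ≤ (c:ℕ) + 1)]
        ring
      have habs : |(p:ℝ) - (c:ℝ)| = (c:ℝ) - (p:ℝ) := by
        rw [abs_sub_comm, abs_of_nonneg]
        have : (p:ℝ) ≤ (c:ℝ) := by exact_mod_cast hp'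
        linarith
      rw [habs, hcast]
      ring_nf
  have part2 : (∑' n : (Sᶜ : Set ℕ+), F n) ≤ ∑' n, G n := by
    have hmem : ∀ p : (Sᶜ : Set ℕ+), (c:ℕ) < ((p:ℕ+):ℕ) := by
      rintro ⟨p, hp⟩
      simpa [hS, Set.mem_compl_iff] using hp
    refine tsum_subtype_le' F G (fun p => ⟨((p:ℕ+):ℕ) - (c:ℕ), by have := hmem p; omega⟩) ?_ ?_
    · rintro ⟨p, hp⟩ ⟨q, hq⟩ h
      have h' := congrArg (fun x : ℕ+ => (x:ℕ)) h
      simp only [PNat.mk_coe] at h'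
      have hp' : (c:ℕ) < (p:ℕ) := hmem ⟨p, hp⟩
      have hq' : (c:ℕ) < (q:ℕ) := hmem ⟨q, hq⟩
      have h'' : (p:ℕ) - (c:ℕ) = (q:ℕ) - (c:ℕ) := h'
      apply Subtype.ext
      apply PNat.coe_injective
      show (p:ℕ) = (q:ℕ)
      omega
    · rintro ⟨p, hp⟩
      have hp' : (c:ℕ) < (p:ℕ) := hmem ⟨p, hp⟩
      simp only [hF, hG, PNat.mk_coe]
      apply ENNReal.ofReal_le_ofReal
      have hcast : (((p:ℕ) - (c:ℕ) : ℕ) : ℝ) = (p:ℝ) - (c:ℝ) := by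
        push_cast [Nat.cast_sub hp'.le]
        ring
      have h1 : (1:ℝ) ≤ (((p:ℕ) - (c:ℕ) : ℕ) : ℝ) := by
        have : 1 ≤ (p:ℕ) - (c:ℕ) := by omega
        exact_mod_cast this
      apply Real.rpow_le_rpow_of_nonpos (by linarith) _ (by linarith)
      have habs : |(p:ℝ) - (c:ℝ)| = (p:ℝ) - (c:ℝ) := by
        apply abs_of_nonneg
        have : (c:ℝ) ≤ (p:ℝ) := by exact_mod_cast hp'.le
        linarith
      rw [habs, hcast]
      linarith
  exact add_le_add part1 part2

end Stmt7Helpers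

noncomputable section

variable (s β s' : ℝ)

/-- the real kernel -/
def Kr (a b : ℕ+) : ℝ :=
  ((a:ℝ) * (b:ℝ)) ^ (-β) * (1 + |(a:ℝ) - (b:ℝ)|)⁻¹ *
    (Real.sqrt (min (a:ℝ) (b:ℝ)) /
      (Real.sqrt (min (a:ℝ) (b:ℝ)) + |(a:ℝ) - (b:ℝ)|)) ^ (s / 2)

/-- the weighted kernel -/
def mker (a b : ℕ+) : ℝ := (a:ℝ) ^ ((s'+2*β)/2) * Kr s β a b * (b:ℝ) ^ (-(s'/2))

/-- ENNReal zeta-type constant -/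
def Zenn : ℝ≥0∞ := ∑' n : ℕ+, ENNReal.ofReal ((n:ℝ) ^ (-(1+β/2)))

variable {s β s'}

lemma Kr_nonneg (a b : ℕ+) : 0 ≤ Kr s β a b := by
  have h1 : (0:ℝ) < 1 + |(a:ℝ) - (b:ℝ)| := by positivity
  have h2 : (0:ℝ) ≤ ((a:ℝ) * (b:ℝ)) ^ (-β) := Real.rpow_nonneg (by positivity) _
  have h3 : (0:ℝ) ≤ (Real.sqrt (min (a:ℝ) (b:ℝ)) /
      (Real.sqrt (min (a:ℝ) (b:ℝ)) + |(a:ℝ) - (b:ℝ)|)) ^ (s / 2) := by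
    apply Real.rpow_nonneg
    apply div_nonneg (Real.sqrt_nonneg _)
    have := Real.sqrt_nonneg (min (a:ℝ) (b:ℝ))
    have := abs_nonneg ((a:ℝ) - (b:ℝ))
    linarith
  exact mul_nonneg (mul_nonneg h2 (inv_nonneg.2 h1.le)) h3

lemma mker_nonneg (a b : ℕ+) : 0 ≤ mker s β s' a b := by
  unfold mker
  have := Kr_nonneg (s := s) (β := β) a b
  have h1 : (0:ℝ) ≤ (a:ℝ) ^ ((s'+2*β)/2) := Real.rpow_nonneg (by positivity) _
  have h2 : (0:ℝ) ≤ (b:ℝ) ^ (-(s'/2)) := Real.rpow_nonneg (by positivity) _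
  positivity

lemma mker_le (hs'0 : 0 ≤ s') (hs's : s' ≤ s) (hβ0 : 0 < β) (a b : ℕ+) :
    mker s β s' a b ≤ (b:ℝ) ^ (-β) * (1 + |(a:ℝ) - (b:ℝ)|)⁻¹ :=
  kernel_bound hs'0 hs's hβ0 (pnat_one_le_cast a) (pnat_one_le_cast b)

lemma row_sum (hs'0 : 0 ≤ s') (hs's : s' ≤ s) (hβ0 : 0 < β) (hβ1 : β ≤ 1) (a : ℕ+) :
    ∑' b : ℕ+, ENNReal.ofReal (mker s β s' a b * (b:ℝ) ^ (-(β/2))) ≤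
      ENNReal.ofReal ((a:ℝ) ^ (-(β/2))) * (3 * Zenn β) := by
  have key : ∀ b : ℕ+,
      ENNReal.ofReal (mker s β s' a b * (b:ℝ) ^ (-(β/2))) ≤
        ENNReal.ofReal ((a:ℝ) ^ (-(β/2))) * ENNReal.ofReal ((b:ℝ) ^ (-(1+β/2))) +
        ENNReal.ofReal ((a:ℝ) ^ (-(β/2))) *
          ENNReal.ofReal ((1 + |(a:ℝ) - (b:ℝ)|) ^ (-(1+β/2))) := by
    intro b
    have hb0 : (0:ℝ) ≤ (b:ℝ) ^ (-(β/2)) := Real.rpow_nonneg (by positivity) _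
    have step : mker s β s' a b * (b:ℝ) ^ (-(β/2)) ≤
        (a:ℝ) ^ (-(β/2)) * ((b:ℝ) ^ (-(1+β/2)) + (1 + |(a:ℝ) - (b:ℝ)|) ^ (-(1+β/2))) := by
      calc mker s β s' a b * (b:ℝ) ^ (-(β/2))
          ≤ ((b:ℝ) ^ (-β) * (1 + |(a:ℝ) - (b:ℝ)|)⁻¹) * (b:ℝ) ^ (-(β/2)) :=
            mul_le_mul_of_nonneg_right (mker_le hs'0 hs's hβ0 a b) hb0
        _ ≤ _ := row_pointwise hβ0 hβ1 (pnat_one_le_cast a) (pnat_one_le_cast b)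
    calc ENNReal.ofReal (mker s β s' a b * (b:ℝ) ^ (-(β/2)))
        ≤ ENNReal.ofReal ((a:ℝ) ^ (-(β/2)) * ((b:ℝ) ^ (-(1+β/2)) +
            (1 + |(a:ℝ) - (b:ℝ)|) ^ (-(1+β/2)))) := ENNReal.ofReal_le_ofReal step
      _ = _ := by
          rw [ENNReal.ofReal_mul (Real.rpow_nonneg (by positivity) _),
            ENNReal.ofReal_add (Real.rpow_nonneg (by positivity) _)
              (Real.rpow_nonneg (by positivity) _), mul_add]
  calc ∑' b : ℕ+, ENNReal.ofReal (mker s β s' a b * (b:ℝ) ^ (-(β/2)))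
      ≤ ∑' b : ℕ+, (ENNReal.ofReal ((a:ℝ) ^ (-(β/2))) * ENNReal.ofReal ((b:ℝ) ^ (-(1+β/2))) +
          ENNReal.ofReal ((a:ℝ) ^ (-(β/2))) *
            ENNReal.ofReal ((1 + |(a:ℝ) - (b:ℝ)|) ^ (-(1+β/2)))) :=
        Summable.tsum_le_tsum key ENNReal.summable ENNReal.summable
    _ = ENNReal.ofReal ((a:ℝ) ^ (-(β/2))) * Zenn β +
        ENNReal.ofReal ((a:ℝ) ^ (-(β/2))) *
          ∑' b : ℕ+, ENNReal.ofReal ((1 + |(a:ℝ) - (b:ℝ)|) ^ (-(1+β/2))) := by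
        rw [ENNReal.tsum_add, ENNReal.tsum_mul_left, ENNReal.tsum_mul_left]
        rfl
    _ ≤ ENNReal.ofReal ((a:ℝ) ^ (-(β/2))) * Zenn β +
        ENNReal.ofReal ((a:ℝ) ^ (-(β/2))) * (2 * Zenn β) := by
        gcongr
        have : ∀ b : ℕ+, (1 + |(a:ℝ) - (b:ℝ)|) = (1 + |(b:ℝ) - (a:ℝ)|) := by
          intro b; rw [abs_sub_comm]
        calc ∑' b : ℕ+, ENNReal.ofReal ((1 + |(a:ℝ) - (b:ℝ)|) ^ (-(1+β/2)))
            = ∑' b : ℕ+, ENNReal.ofReal ((1 + |(b:ℝ) - (a:ℝ)|) ^ (-(1+β/2))) := by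
              apply tsum_congr; intro b; rw [this b]
          _ ≤ 2 * ∑' n : ℕ+, ENNReal.ofReal ((n:ℝ) ^ (-(1+β/2))) :=
              shift_sum (by linarith) a
          _ = 2 * Zenn β := rfl
    _ = ENNReal.ofReal ((a:ℝ) ^ (-(β/2))) * (3 * Zenn β) := by ring

lemma col_sum (hs'0 : 0 ≤ s') (hs's : s' ≤ s) (hβ0 : 0 < β) (hβ1 : β ≤ 1) (b : ℕ+) :
    ∑' a : ℕ+, ENNReal.ofReal (mker s β s' a b * (a:ℝ) ^ (-(β/2))) ≤
      ENNReal.ofReal ((b:ℝ) ^ (-(β/2))) * (3 * Zenn β) := by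
  have key : ∀ a : ℕ+,
      ENNReal.ofReal (mker s β s' a b * (a:ℝ) ^ (-(β/2))) ≤
        ENNReal.ofReal ((b:ℝ) ^ (-(β/2))) * ENNReal.ofReal ((a:ℝ) ^ (-(1+β/2))) +
        ENNReal.ofReal ((b:ℝ) ^ (-(β/2))) *
          ENNReal.ofReal ((1 + |(a:ℝ) - (b:ℝ)|) ^ (-(1+β/2))) := by
    intro a
    have ha0 : (0:ℝ) ≤ (a:ℝ) ^ (-(β/2)) := Real.rpow_nonneg (by positivity) _
    have step : mker s β s' a b * (a:ℝ) ^ (-(β/2)) ≤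
        (b:ℝ) ^ (-(β/2)) * ((a:ℝ) ^ (-(1+β/2)) + (1 + |(a:ℝ) - (b:ℝ)|) ^ (-(1+β/2))) := by
      calc mker s β s' a b * (a:ℝ) ^ (-(β/2))
          ≤ ((b:ℝ) ^ (-β) * (1 + |(a:ℝ) - (b:ℝ)|)⁻¹) * (a:ℝ) ^ (-(β/2)) :=
            mul_le_mul_of_nonneg_right (mker_le hs'0 hs's hβ0 a b) ha0
        _ ≤ _ := col_pointwise hβ0 hβ1 (pnat_one_le_cast a) (pnat_one_le_cast b)
    calc ENNReal.ofReal (mker s β s' a b * (a:ℝ) ^ (-(β/2)))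
        ≤ ENNReal.ofReal ((b:ℝ) ^ (-(β/2)) * ((a:ℝ) ^ (-(1+β/2)) +
            (1 + |(a:ℝ) - (b:ℝ)|) ^ (-(1+β/2)))) := ENNReal.ofReal_le_ofReal step
      _ = _ := by
          rw [ENNReal.ofReal_mul (Real.rpow_nonneg (by positivity) _),
            ENNReal.ofReal_add (Real.rpow_nonneg (by positivity) _)
              (Real.rpow_nonneg (by positivity) _), mul_add]
  calc ∑' a : ℕ+, ENNReal.ofReal (mker s β s' a b * (a:ℝ) ^ (-(β/2)))
      ≤ ∑' a : ℕ+, (ENNReal.ofReal ((b:ℝ) ^ (-(β/2))) * ENNReal.ofReal ((a:ℝ) ^ (-(1+β/2))) +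
          ENNReal.ofReal ((b:ℝ) ^ (-(β/2))) *
            ENNReal.ofReal ((1 + |(a:ℝ) - (b:ℝ)|) ^ (-(1+β/2)))) :=
        Summable.tsum_le_tsum key ENNReal.summable ENNReal.summable
    _ = ENNReal.ofReal ((b:ℝ) ^ (-(β/2))) * Zenn β +
        ENNReal.ofReal ((b:ℝ) ^ (-(β/2))) *
          ∑' a : ℕ+, ENNReal.ofReal ((1 + |(a:ℝ) - (b:ℝ)|) ^ (-(1+β/2))) := by
        rw [ENNReal.tsum_add, ENNReal.tsum_mul_left, ENNReal.tsum_mul_left]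
        rfl
    _ ≤ ENNReal.ofReal ((b:ℝ) ^ (-(β/2))) * Zenn β +
        ENNReal.ofReal ((b:ℝ) ^ (-(β/2))) * (2 * Zenn β) := by
        gcongr
        exact shift_sum (by linarith) b
    _ = ENNReal.ofReal ((b:ℝ) ^ (-(β/2))) * (3 * Zenn β) := by ring


lemma main_enn (hs'0 : 0 ≤ s') (hs's : s' ≤ s) (hβ0 : 0 < β) (hβ1 : β ≤ 1) (ξ : ℕ+ → ℝ) :
    ∑' a : ℕ+, ENNReal.ofReal ((a:ℝ) ^ (s'+2*β)) *
        (∑' b : ℕ+, ENNReal.ofReal (Kr s β a b * |ξ b|)) ^ 2 ≤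
      (3 * Zenn β) ^ 2 * ∑' b : ℕ+, ENNReal.ofReal ((b:ℝ) ^ s' * |ξ b| ^ 2) := by
  have hx0 : ∀ a : ℕ+, (0:ℝ) < (a:ℝ) := fun a => lt_of_lt_of_le one_pos (pnat_one_le_cast a)
  -- step A : rewrite each a-term
  have stepA : ∀ a : ℕ+, ENNReal.ofReal ((a:ℝ) ^ (s'+2*β)) *
      (∑' b : ℕ+, ENNReal.ofReal (Kr s β a b * |ξ b|)) ^ 2 =
      (∑' b : ℕ+, ENNReal.ofReal (mker s β s' a b * ((b:ℝ) ^ (s'/2) * |ξ b|))) ^ 2 := by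
    intro a
    have e1 : (a:ℝ) ^ (s'+2*β) = ((a:ℝ) ^ ((s'+2*β)/2)) ^ (2:ℕ) := by
      rw [← Real.rpow_natCast ((a:ℝ) ^ ((s'+2*β)/2)) 2, ← Real.rpow_mul (hx0 a).le]
      congr 1
      push_cast
      ring
    have e2 : ∀ b : ℕ+, (a:ℝ) ^ ((s'+2*β)/2) * (Kr s β a b * |ξ b|) =
        mker s β s' a b * ((b:ℝ) ^ (s'/2) * |ξ b|) := by
      intro b
      have hyy : (b:ℝ) ^ (-(s'/2)) * (b:ℝ) ^ (s'/2) = 1 :=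
        rpow_merge (hx0 b) _ _ 0 (by ring) |>.trans (Real.rpow_zero _)
      unfold mker
      rw [show (a:ℝ) ^ ((s'+2*β)/2) * Kr s β a b * (b:ℝ) ^ (-(s'/2)) *
          ((b:ℝ) ^ (s'/2) * |ξ b|) = (a:ℝ) ^ ((s'+2*β)/2) * (Kr s β a b * |ξ b|) *
          ((b:ℝ) ^ (-(s'/2)) * (b:ℝ) ^ (s'/2)) from by ring, hyy, mul_one]
    rw [e1, ENNReal.ofReal_pow (Real.rpow_nonneg (hx0 a).le _), ← mul_pow]
    congr 1
    rw [← ENNReal.tsum_mul_left]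
    apply tsum_congr
    intro b
    rw [← ENNReal.ofReal_mul (Real.rpow_nonneg (hx0 a).le _), e2 b]
  -- step B : Cauchy-Schwarz for each a
  have hBf : ∀ a b : ℕ+, (0:ℝ) ≤ mker s β s' a b * (b:ℝ) ^ (-(β/2)) * (a:ℝ) ^ (β/2) :=
    fun a b => mul_nonneg (mul_nonneg (mker_nonneg a b) (Real.rpow_nonneg (hx0 b).le _))
      (Real.rpow_nonneg (hx0 a).le _)
  have hBg : ∀ a b : ℕ+, (0:ℝ) ≤ mker s β s' a b * (a:ℝ) ^ (-(β/2)) * (b:ℝ) ^ (β/2) :=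
    fun a b => mul_nonneg (mul_nonneg (mker_nonneg a b) (Real.rpow_nonneg (hx0 a).le _))
      (Real.rpow_nonneg (hx0 b).le _)
  have hfg : ∀ a b : ℕ+, mker s β s' a b * ((b:ℝ) ^ (s'/2) * |ξ b|) = Real.sqrt (mker s β s' a b * (b:ℝ) ^ (-(β/2)) * (a:ℝ) ^ (β/2)) * (Real.sqrt (mker s β s' a b * (a:ℝ) ^ (-(β/2)) * (b:ℝ) ^ (β/2)) * ((b:ℝ) ^ (s'/2) * |ξ b|)) := by
    intro a b
    have h1 : (a:ℝ) ^ (β/2) * (a:ℝ) ^ (-(β/2)) = 1 :=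
      rpow_merge (hx0 a) _ _ 0 (by ring) |>.trans (Real.rpow_zero _)
    have h2 : (b:ℝ) ^ (-(β/2)) * (b:ℝ) ^ (β/2) = 1 :=
      rpow_merge (hx0 b) _ _ 0 (by ring) |>.trans (Real.rpow_zero _)
    have hsq : Real.sqrt (mker s β s' a b * (b:ℝ) ^ (-(β/2)) * (a:ℝ) ^ (β/2)) * Real.sqrt (mker s β s' a b * (a:ℝ) ^ (-(β/2)) * (b:ℝ) ^ (β/2)) =
        mker s β s' a b := by
      rw [← Real.sqrt_mul (hBf a b)]
      rw [show mker s β s' a b * (b:ℝ) ^ (-(β/2)) * (a:ℝ) ^ (β/2) *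
          (mker s β s' a b * (a:ℝ) ^ (-(β/2)) * (b:ℝ) ^ (β/2)) =
          (mker s β s' a b) ^ 2 * (((a:ℝ) ^ (β/2) * (a:ℝ) ^ (-(β/2))) *
            ((b:ℝ) ^ (-(β/2)) * (b:ℝ) ^ (β/2))) by ring, h1, h2, mul_one, mul_one,
        Real.sqrt_sq (mker_nonneg a b)]
    calc mker s β s' a b * ((b:ℝ) ^ (s'/2) * |ξ b|)
        = (Real.sqrt (mker s β s' a b * (b:ℝ) ^ (-(β/2)) * (a:ℝ) ^ (β/2)) * Real.sqrt (mker s β s' a b * (a:ℝ) ^ (-(β/2)) * (b:ℝ) ^ (β/2))) *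
            ((b:ℝ) ^ (s'/2) * |ξ b|) := by rw [hsq]
      _ = _ := by ring
  have hf2 : ∀ a b : ℕ+, ENNReal.ofReal (Real.sqrt (mker s β s' a b * (b:ℝ) ^ (-(β/2)) * (a:ℝ) ^ (β/2))) ^ 2 =
      ENNReal.ofReal (mker s β s' a b * (b:ℝ) ^ (-(β/2))) * ENNReal.ofReal ((a:ℝ) ^ (β/2)) := by
    intro a b
    rw [← ENNReal.ofReal_pow (Real.sqrt_nonneg _), Real.sq_sqrt (hBf a b),
      ENNReal.ofReal_mul (mul_nonneg (mker_nonneg a b) (Real.rpow_nonneg (hx0 b).le _))]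
  have hg2 : ∀ a b : ℕ+, ENNReal.ofReal (Real.sqrt (mker s β s' a b * (a:ℝ) ^ (-(β/2)) * (b:ℝ) ^ (β/2)) * ((b:ℝ) ^ (s'/2) * |ξ b|)) ^ 2 =
      ENNReal.ofReal (mker s β s' a b * (a:ℝ) ^ (-(β/2))) *
        ENNReal.ofReal ((b:ℝ) ^ (β/2+s') * |ξ b| ^ 2) := by
    intro a b
    rw [← ENNReal.ofReal_pow (mul_nonneg (Real.sqrt_nonneg _)
      (mul_nonneg (Real.rpow_nonneg (hx0 b).le _) (abs_nonneg _)))]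
    have hb2 : ((b:ℝ) ^ (s'/2)) ^ (2:ℕ) = (b:ℝ) ^ s' := by
      rw [← Real.rpow_natCast ((b:ℝ) ^ (s'/2)) 2, ← Real.rpow_mul (hx0 b).le]
      congr 1
      push_cast
      ring
    have hmerge : (b:ℝ) ^ (β/2) * (b:ℝ) ^ s' = (b:ℝ) ^ (β/2+s') :=
      rpow_merge (hx0 b) _ _ _ rfl
    have : (Real.sqrt (mker s β s' a b * (a:ℝ) ^ (-(β/2)) * (b:ℝ) ^ (β/2)) *
        ((b:ℝ) ^ (s'/2) * |ξ b|)) ^ (2:ℕ) =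
        mker s β s' a b * (a:ℝ) ^ (-(β/2)) * ((b:ℝ) ^ (β/2+s') * |ξ b| ^ 2) := by
      rw [mul_pow, Real.sq_sqrt (hBg a b), mul_pow, hb2, ← hmerge]
      ring
    rw [this, ENNReal.ofReal_mul (mul_nonneg (mker_nonneg a b) (Real.rpow_nonneg (hx0 a).le _))]
  -- CS application
  have stepB : ∀ a : ℕ+,
      (∑' b : ℕ+, ENNReal.ofReal (mker s β s' a b * ((b:ℝ) ^ (s'/2) * |ξ b|))) ^ 2 ≤
      (3 * Zenn β) * ∑' b : ℕ+, ENNReal.ofReal (mker s β s' a b * (a:ℝ) ^ (-(β/2))) *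
        ENNReal.ofReal ((b:ℝ) ^ (β/2+s') * |ξ b| ^ 2) := by
    intro a
    have e3 : ∀ b : ℕ+, ENNReal.ofReal (mker s β s' a b * ((b:ℝ) ^ (s'/2) * |ξ b|)) =
        ENNReal.ofReal (Real.sqrt (mker s β s' a b * (b:ℝ) ^ (-(β/2)) * (a:ℝ) ^ (β/2))) * ENNReal.ofReal (Real.sqrt (mker s β s' a b * (a:ℝ) ^ (-(β/2)) * (b:ℝ) ^ (β/2)) * ((b:ℝ) ^ (s'/2) * |ξ b|)) := by
      intro b
      rw [← ENNReal.ofReal_mul (Real.sqrt_nonneg _), ← hfg a b]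
    calc (∑' b : ℕ+, ENNReal.ofReal (mker s β s' a b * ((b:ℝ) ^ (s'/2) * |ξ b|))) ^ 2
        = (∑' b : ℕ+, ENNReal.ofReal (Real.sqrt (mker s β s' a b * (b:ℝ) ^ (-(β/2)) * (a:ℝ) ^ (β/2))) * ENNReal.ofReal (Real.sqrt (mker s β s' a b * (a:ℝ) ^ (-(β/2)) * (b:ℝ) ^ (β/2)) * ((b:ℝ) ^ (s'/2) * |ξ b|))) ^ 2 := by
          congr 1; exact tsum_congr e3
      _ ≤ (∑' b : ℕ+, ENNReal.ofReal (Real.sqrt (mker s β s' a b * (b:ℝ) ^ (-(β/2)) * (a:ℝ) ^ (β/2))) ^ 2) * (∑' b : ℕ+, ENNReal.ofReal (Real.sqrt (mker s β s' a b * (a:ℝ) ^ (-(β/2)) * (b:ℝ) ^ (β/2)) * ((b:ℝ) ^ (s'/2) * |ξ b|)) ^ 2) :=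
          tsum_cs _ _
      _ ≤ (3 * Zenn β) * ∑' b : ℕ+, ENNReal.ofReal (mker s β s' a b * (a:ℝ) ^ (-(β/2))) *
          ENNReal.ofReal ((b:ℝ) ^ (β/2+s') * |ξ b| ^ 2) := by
          apply mul_le_mul'
          · -- row estimate
            have hx1 : (a:ℝ) ^ (-(β/2)) * (a:ℝ) ^ (β/2) = 1 :=
              rpow_merge (hx0 a) _ _ 0 (by ring) |>.trans (Real.rpow_zero _)
            calc ∑' b : ℕ+, ENNReal.ofReal (Real.sqrt (mker s β s' a b * (b:ℝ) ^ (-(β/2)) * (a:ℝ) ^ (β/2))) ^ 2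
                = (∑' b : ℕ+, ENNReal.ofReal (mker s β s' a b * (b:ℝ) ^ (-(β/2)))) *
                    ENNReal.ofReal ((a:ℝ) ^ (β/2)) := by
                  rw [← ENNReal.tsum_mul_right]; exact tsum_congr (hf2 a)
              _ ≤ (ENNReal.ofReal ((a:ℝ) ^ (-(β/2))) * (3 * Zenn β)) *
                    ENNReal.ofReal ((a:ℝ) ^ (β/2)) := by
                  gcongr
                  exact row_sum hs'0 hs's hβ0 hβ1 a
              _ = (ENNReal.ofReal ((a:ℝ) ^ (-(β/2))) * ENNReal.ofReal ((a:ℝ) ^ (β/2))) *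
                    (3 * Zenn β) := by ring
              _ = 3 * Zenn β := by
                  rw [← ENNReal.ofReal_mul (Real.rpow_nonneg (hx0 a).le _), hx1,
                    ENNReal.ofReal_one, one_mul]
          · exact le_of_eq (tsum_congr (hg2 a))
  -- assemble
  calc ∑' a : ℕ+, ENNReal.ofReal ((a:ℝ) ^ (s'+2*β)) *
        (∑' b : ℕ+, ENNReal.ofReal (Kr s β a b * |ξ b|)) ^ 2
      = ∑' a : ℕ+, (∑' b : ℕ+, ENNReal.ofReal (mker s β s' a b * ((b:ℝ) ^ (s'/2) * |ξ b|))) ^ 2 :=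
        tsum_congr stepA
    _ ≤ ∑' a : ℕ+, (3 * Zenn β) * ∑' b : ℕ+,
          ENNReal.ofReal (mker s β s' a b * (a:ℝ) ^ (-(β/2))) *
            ENNReal.ofReal ((b:ℝ) ^ (β/2+s') * |ξ b| ^ 2) :=
        Summable.tsum_le_tsum stepB ENNReal.summable ENNReal.summable
    _ = (3 * Zenn β) * ∑' b : ℕ+, (∑' a : ℕ+,
          ENNReal.ofReal (mker s β s' a b * (a:ℝ) ^ (-(β/2)))) *
            ENNReal.ofReal ((b:ℝ) ^ (β/2+s') * |ξ b| ^ 2) := by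
        rw [ENNReal.tsum_mul_left]
        congr 1
        rw [ENNReal.tsum_comm]
        apply tsum_congr
        intro b
        rw [ENNReal.tsum_mul_right]
    _ ≤ (3 * Zenn β) * ∑' b : ℕ+, (ENNReal.ofReal ((b:ℝ) ^ (-(β/2))) * (3 * Zenn β)) *
          ENNReal.ofReal ((b:ℝ) ^ (β/2+s') * |ξ b| ^ 2) := by
        gcongr with b
        exact col_sum hs'0 hs's hβ0 hβ1 b
    _ = (3 * Zenn β) ^ 2 * ∑' b : ℕ+, ENNReal.ofReal ((b:ℝ) ^ (-(β/2))) *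
          ENNReal.ofReal ((b:ℝ) ^ (β/2+s') * |ξ b| ^ 2) := by
        rw [← ENNReal.tsum_mul_left]
        rw [← ENNReal.tsum_mul_left]
        apply tsum_congr
        intro b
        ring
    _ = (3 * Zenn β) ^ 2 * ∑' b : ℕ+, ENNReal.ofReal ((b:ℝ) ^ s' * |ξ b| ^ 2) := by
        congr 1
        apply tsum_congr
        intro b
        rw [← ENNReal.ofReal_mul (Real.rpow_nonneg (hx0 b).le _)]
        congr 1
        rw [show (b:ℝ) ^ (-(β/2)) * ((b:ℝ) ^ (β/2+s') * |ξ b| ^ 2)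
            = ((b:ℝ) ^ (-(β/2)) * (b:ℝ) ^ (β/2+s')) * |ξ b| ^ 2 by ring,
          rpow_merge (hx0 b) _ _ s' (by ring)]


/-- Lemma 2.3 (iv), scalar-kernel form: the kernel
`K(a,b) = (ab)^{-β}(1+|a-b|)^{-1} (√min(a,b)/(√min(a,b)+|a-b|))^{s/2}`
defines an operator mapping `ℓ²_{s'}` boundedly into `ℓ²_{s'+2β}` for all `0 ≤ s' ≤ s`. -/
theorem stmt_7 (s β : ℝ) (hs : 0 ≤ s) (hβ0 : 0 < β) (hβ1 : β ≤ 1) :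
    ∃ C > 0, ∀ s' : ℝ, 0 ≤ s' → s' ≤ s →
      ∀ ξ : ℕ+ → ℝ, Summable (fun b : ℕ+ => (b : ℝ) ^ s' * |ξ b| ^ 2) →
        ∑' a : ℕ+, (a : ℝ) ^ (s' + 2 * β) *
          (∑' b : ℕ+, ((a : ℝ) * (b : ℝ)) ^ (-β) * (1 + |(a : ℝ) - (b : ℝ)|)⁻¹ *
            (Real.sqrt (min (a : ℝ) (b : ℝ)) /
              (Real.sqrt (min (a : ℝ) (b : ℝ)) + |(a : ℝ) - (b : ℝ)|)) ^ (s / 2) * |ξ b|) ^ 2 ≤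
        C * ∑' b : ℕ+, (b : ℝ) ^ s' * |ξ b| ^ 2 := by
  classical
  set Zr : ℝ := ∑' n : ℕ+, (n:ℝ) ^ (-(1+β/2)) with hZr
  have hZsum : Summable (fun n : ℕ+ => (n:ℝ) ^ (-(1+β/2))) :=
    pnat_summable_rpow (by linarith)
  have hposcast : ∀ n : ℕ+, (0:ℝ) < (n:ℝ) := by
    intro n; exact_mod_cast n.pos
  have hZnn : 0 ≤ Zr := tsum_nonneg (fun n => Real.rpow_nonneg (hposcast n).le _)
  have hZenn : Zenn β = ENNReal.ofReal Zr := by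
    rw [hZr, ENNReal.ofReal_tsum_of_nonneg (fun n => Real.rpow_nonneg (hposcast n).le _) hZsum]
    rfl
  refine ⟨9 * Zr^2 + 1, by positivity, ?_⟩
  intro s' hs'0 hs's ξ hsum
  show ∑' a : ℕ+, (a : ℝ) ^ (s' + 2 * β) * (∑' b : ℕ+, Kr s β a b * |ξ b|) ^ 2 ≤
      (9 * Zr^2 + 1) * ∑' b : ℕ+, (b : ℝ) ^ s' * |ξ b| ^ 2
  set RHSr : ℝ := ∑' b : ℕ+, (b : ℝ) ^ s' * |ξ b| ^ 2 with hRHSr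
  have hterm_nn : ∀ b : ℕ+, 0 ≤ (b : ℝ) ^ s' * |ξ b| ^ 2 :=
    fun b => mul_nonneg (Real.rpow_nonneg (hposcast b).le _) (sq_nonneg _)
  have hRHS0 : 0 ≤ RHSr := tsum_nonneg hterm_nn
  -- per-a comparison of real tsum with ENNReal tsum
  have hA : ∀ a : ℕ+, ENNReal.ofReal ((a : ℝ) ^ (s' + 2 * β) *
      (∑' b : ℕ+, Kr s β a b * |ξ b|) ^ 2) ≤
      ENNReal.ofReal ((a:ℝ) ^ (s'+2*β)) *
        (∑' b : ℕ+, ENNReal.ofReal (Kr s β a b * |ξ b|)) ^ 2 := by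
    intro a
    have hwa : (0:ℝ) ≤ (a:ℝ) ^ (s'+2*β) := Real.rpow_nonneg (hposcast a).le _
    by_cases hsa : Summable (fun b : ℕ+ => Kr s β a b * |ξ b|)
    · apply le_of_eq
      rw [ENNReal.ofReal_mul hwa,
        ENNReal.ofReal_pow (tsum_nonneg (fun b => mul_nonneg (Kr_nonneg a b) (abs_nonneg _))),
        ENNReal.ofReal_tsum_of_nonneg (fun b => mul_nonneg (Kr_nonneg a b) (abs_nonneg _)) hsa]
    · rw [tsum_eq_zero_of_not_summable hsa]
      simp
  have hmain := main_enn hs'0 hs's hβ0 hβ1 ξ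
  have hRenn : ∑' b : ℕ+, ENNReal.ofReal ((b:ℝ) ^ s' * |ξ b| ^ 2) = ENNReal.ofReal RHSr := by
    rw [hRHSr, ENNReal.ofReal_tsum_of_nonneg hterm_nn hsum]
  have hC : (3 * Zenn β) ^ 2 * ENNReal.ofReal RHSr ≤
      ENNReal.ofReal ((9 * Zr^2 + 1) * RHSr) := by
    rw [hZenn, show (3 : ℝ≥0∞) = ENNReal.ofReal (3:ℝ) by simp,
      ← ENNReal.ofReal_mul (by norm_num),
      ← ENNReal.ofReal_pow (by positivity),
      ← ENNReal.ofReal_mul (by positivity)]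
    apply ENNReal.ofReal_le_ofReal
    have : (3 * Zr) ^ 2 = 9 * Zr ^ 2 := by ring
    rw [this]
    nlinarith [hRHS0, hZnn]
  have hle : ∑' a : ℕ+, ENNReal.ofReal ((a : ℝ) ^ (s' + 2 * β) *
      (∑' b : ℕ+, Kr s β a b * |ξ b|) ^ 2) ≤ ENNReal.ofReal ((9 * Zr^2 + 1) * RHSr) := by
    calc ∑' a : ℕ+, ENNReal.ofReal ((a : ℝ) ^ (s' + 2 * β) *
        (∑' b : ℕ+, Kr s β a b * |ξ b|) ^ 2)
        ≤ ∑' a : ℕ+, ENNReal.ofReal ((a:ℝ) ^ (s'+2*β)) *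
            (∑' b : ℕ+, ENNReal.ofReal (Kr s β a b * |ξ b|)) ^ 2 :=
          Summable.tsum_le_tsum hA ENNReal.summable ENNReal.summable
      _ ≤ (3 * Zenn β) ^ 2 * ∑' b : ℕ+, ENNReal.ofReal ((b:ℝ) ^ s' * |ξ b| ^ 2) := hmain
      _ = (3 * Zenn β) ^ 2 * ENNReal.ofReal RHSr := by rw [hRenn]
      _ ≤ _ := hC
  have hTnn : ∀ a : ℕ+, 0 ≤ (a : ℝ) ^ (s' + 2 * β) *
      (∑' b : ℕ+, Kr s β a b * |ξ b|) ^ 2 :=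
    fun a => mul_nonneg (Real.rpow_nonneg (hposcast a).le _) (sq_nonneg _)
  have h1 : ∑' a : ℕ+, (a : ℝ) ^ (s' + 2 * β) * (∑' b : ℕ+, Kr s β a b * |ξ b|) ^ 2 =
      (∑' a : ℕ+, ENNReal.ofReal ((a : ℝ) ^ (s' + 2 * β) *
        (∑' b : ℕ+, Kr s β a b * |ξ b|) ^ 2)).toReal := by
    rw [ENNReal.tsum_toReal_eq (fun a => ENNReal.ofReal_ne_top)]
    exact tsum_congr (fun a => (ENNReal.toReal_ofReal (hTnn a)).symm)
  rw [h1]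
  calc (∑' a : ℕ+, ENNReal.ofReal ((a : ℝ) ^ (s' + 2 * β) *
        (∑' b : ℕ+, Kr s β a b * |ξ b|) ^ 2)).toReal
      ≤ (ENNReal.ofReal ((9 * Zr^2 + 1) * RHSr)).toReal :=
        ENNReal.toReal_mono ENNReal.ofReal_ne_top hle
    _ = (9 * Zr^2 + 1) * RHSr := ENNReal.toReal_ofReal (by positivity)


end
end

section
/- Let A and B be infinite matrices indexed by positive integers satisfying |A_a^b| ≤ M_A (ab)^{-β} g(a,b)^{s/2} and |B_a^b| ≤ M_B (ab)^{-β}(1+|a-b|)^{-1} g(a,b)^{s/2}, where g(a,b) = √(min(a,b))/(√(min(a,b)) + |a-b|), β ∈ (0,1], s ≥ 0. Then the product AB satisfies |(AB)_a^b| ≤ C M_A M_B (ab)^{-β} g(a,b)^{s/2} with C depending only on β and s. -/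
open Real

private lemma gmul_aux {a b c : ℝ} (ha : 1 ≤ a) (hb : 1 ≤ b) (hc : 1 ≤ c) (hab : a ≤ b) :
    (Real.sqrt (min a c) / (Real.sqrt (min a c) + |a - c|)) *
    (Real.sqrt (min c b) / (Real.sqrt (min c b) + |c - b|)) ≤
    Real.sqrt (min a b) / (Real.sqrt (min a b) + |a - b|) := by
  have hsa : (1:ℝ) ≤ Real.sqrt a := Real.one_le_sqrt.2 ha
  rw [min_eq_left hab, abs_sub_comm a b, abs_of_nonneg (by linarith : (0:ℝ) ≤ b - a)]
  rcases le_total c a with hca | hac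
  · -- c ≤ a ≤ b
    have hsc : (1:ℝ) ≤ Real.sqrt c := Real.one_le_sqrt.2 hc
    have hscsa : Real.sqrt c ≤ Real.sqrt a := Real.sqrt_le_sqrt hca
    have hcb : c ≤ b := hca.trans hab
    rw [min_eq_right hca, min_eq_left hcb,
      abs_of_nonneg (by linarith : (0:ℝ) ≤ a - c), abs_sub_comm c b,
      abs_of_nonneg (by linarith : (0:ℝ) ≤ b - c), div_mul_div_comm,
      div_le_div_iff₀ (mul_pos (by linarith) (by linarith)) (by linarith)]
    have h1 : Real.sqrt c * Real.sqrt c = c := Real.mul_self_sqrt (by linarith)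
    nlinarith [mul_nonneg (mul_nonneg (Real.sqrt_nonneg c)
        (sub_nonneg.2 hscsa)) (sub_nonneg.2 hcb),
      mul_nonneg (mul_nonneg (Real.sqrt_nonneg c)
        (sub_nonneg.2 hscsa)) (sub_nonneg.2 hca),
      mul_nonneg (mul_nonneg (Real.sqrt_nonneg a)
        (sub_nonneg.2 hca)) (sub_nonneg.2 hcb)]
  · -- a ≤ c
    have hsc : (1:ℝ) ≤ Real.sqrt c := Real.one_le_sqrt.2 hc
    set m := min c b with hm
    have hm1 : (1:ℝ) ≤ m := le_min hc hb
    have hsm : (1:ℝ) ≤ Real.sqrt m := Real.one_le_sqrt.2 hm1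
    have hsmc : Real.sqrt m ≤ Real.sqrt c := Real.sqrt_le_sqrt (min_le_left _ _)
    have hkey : Real.sqrt c ≤ Real.sqrt a + (c - a) := by
      have h1 : Real.sqrt c * Real.sqrt c = c := Real.mul_self_sqrt (by linarith)
      have h2 : Real.sqrt a * Real.sqrt a = a := Real.mul_self_sqrt (by linarith)
      have h3 : Real.sqrt a ≤ Real.sqrt c := Real.sqrt_le_sqrt hac
      nlinarith [mul_nonneg (sub_nonneg.2 h3) (by linarith :
        (0:ℝ) ≤ Real.sqrt c + Real.sqrt a - 1)]
    set d := |c - b| with hd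
    have hd0 : 0 ≤ d := abs_nonneg _
    have htri : b - a ≤ (c - a) + d := by
      rcases abs_cases (c - b) with ⟨h, _⟩ | ⟨h, _⟩ <;> rw [hd, h] <;> linarith
    rw [min_eq_left hac, abs_sub_comm a c, abs_of_nonneg (by linarith : (0:ℝ) ≤ c - a),
      div_mul_div_comm, div_le_div_iff₀ (mul_pos (by linarith) (by linarith)) (by linarith)]
    have p1 : 0 ≤ Real.sqrt m * ((c - a) + d - (b - a)) :=
      mul_nonneg (Real.sqrt_nonneg m) (by linarith)
    have p2 : 0 ≤ d * (Real.sqrt a + (c - a) - Real.sqrt m) :=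
      mul_nonneg hd0 (by linarith)
    nlinarith [mul_nonneg (Real.sqrt_nonneg a) (add_nonneg p1 p2)]

private lemma gmul {a b c : ℝ} (ha : 1 ≤ a) (hb : 1 ≤ b) (hc : 1 ≤ c) :
    (Real.sqrt (min a c) / (Real.sqrt (min a c) + |a - c|)) *
    (Real.sqrt (min c b) / (Real.sqrt (min c b) + |c - b|)) ≤
    Real.sqrt (min a b) / (Real.sqrt (min a b) + |a - b|) := by
  rcases le_total a b with h | h
  · exact gmul_aux ha hb hc h
  · have H := gmul_aux hb ha hc h
    rw [min_comm b c, abs_sub_comm b c, min_comm c a, abs_sub_comm c a, min_comm b a,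
      abs_sub_comm b a, mul_comm] at H
    exact H

/-- Lemma 2.3 (i), scalar version. -/
theorem stmt_9 (s β : ℝ) (hs : 0 ≤ s) (hβ0 : 0 < β) (hβ1 : β ≤ 1) :
    ∃ C > 0, ∀ (MA MB : ℝ), 0 ≤ MA → 0 ≤ MB →
      ∀ A B : ℕ+ → ℕ+ → ℂ,
      (∀ a b : ℕ+, ‖A a b‖ ≤ MA * ((a : ℝ) * (b : ℝ)) ^ (-β) *
        (Real.sqrt (min (a : ℝ) (b : ℝ)) /
          (Real.sqrt (min (a : ℝ) (b : ℝ)) + |(a : ℝ) - (b : ℝ)|)) ^ (s / 2)) →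
      (∀ a b : ℕ+, ‖B a b‖ ≤ MB * ((a : ℝ) * (b : ℝ)) ^ (-β) * (1 + |(a : ℝ) - (b : ℝ)|)⁻¹ *
        (Real.sqrt (min (a : ℝ) (b : ℝ)) /
          (Real.sqrt (min (a : ℝ) (b : ℝ)) + |(a : ℝ) - (b : ℝ)|)) ^ (s / 2)) →
      ∀ a b : ℕ+, ‖∑' c : ℕ+, A a c * B c b‖ ≤
        C * MA * MB * ((a : ℝ) * (b : ℝ)) ^ (-β) *
          (Real.sqrt (min (a : ℝ) (b : ℝ)) /
            (Real.sqrt (min (a : ℝ) (b : ℝ)) + |(a : ℝ) - (b : ℝ)|)) ^ (s / 2) := by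
  classical
  set q : ℝ := (1 - β / 2)⁻¹ with hq
  have h1θ : (0:ℝ) < 1 - β / 2 := by linarith
  have hq1 : 1 < q := by
    have h := mul_inv_cancel₀ (ne_of_gt h1θ)
    have hqpos : 0 < q := inv_pos.2 h1θ
    nlinarith
  have h0 : Summable (fun n : ℕ => (n:ℝ) ^ (-q)) :=
    Real.summable_nat_rpow.2 (by linarith)
  have hSnat1 : Summable (fun n : ℕ => ((n:ℝ) + 1) ^ (-q)) :=
    ((summable_nat_add_iff 1).2 h0).congr (fun n => by push_cast; ring_nf)
  have hSnat2 : Summable (fun n : ℕ => ((n:ℝ) + 2) ^ (-q)) :=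
    ((summable_nat_add_iff 2).2 h0).congr (fun n => by push_cast; ring_nf)
  have hSZ : Summable (fun k : ℤ => (1 + |(k:ℝ)|) ^ (-q)) := by
    apply Summable.of_nat_of_neg_add_one
    · refine hSnat1.congr (fun n => ?_)
      have h : |((n:ℤ):ℝ)| = (n:ℝ) := by
        push_cast; exact abs_of_nonneg (by positivity)
      rw [h, add_comm]
    · refine hSnat2.congr (fun n => ?_)
      have h : |((-((n:ℤ) + 1) : ℤ):ℝ)| = (n:ℝ) + 1 := by
        push_cast; rw [abs_neg]; exact abs_of_nonneg (by positivity)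
      rw [h]; ring_nf
  set Z : ℝ := ∑' k : ℤ, (1 + |(k:ℝ)|) ^ (-q) with hZdef
  have hZ0 : 0 ≤ Z := tsum_nonneg (fun k => Real.rpow_nonneg (by positivity) _)
  have hS4 : Summable (fun c : ℕ+ => ((c:ℝ)) ^ (-(4:ℝ))) := by
    have h4 : Summable (fun n : ℕ => (n:ℝ) ^ (-(4:ℝ))) :=
      Real.summable_nat_rpow.2 (by norm_num)
    exact h4.comp_injective PNat.coe_injective
  set S : ℝ := ∑' c : ℕ+, ((c:ℝ)) ^ (-(4:ℝ)) with hSdef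
  have hS0 : 0 ≤ S := tsum_nonneg (fun c => Real.rpow_nonneg (by positivity) _)
  refine ⟨S + Z + 1, by linarith, ?_⟩
  intro MA MB hMA hMB A B hA hB a b
  have ha1 : (1:ℝ) ≤ (a:ℝ) := by exact_mod_cast a.one_le
  have hb1 : (1:ℝ) ≤ (b:ℝ) := by exact_mod_cast b.one_le
  have hinj : Function.Injective (fun c : ℕ+ => (c : ℤ) - (b : ℤ)) := by
    intro c d h
    simp only [sub_left_inj] at h
    exact_mod_cast h
  have hcompeq : ∀ c : ℕ+,
      (1 + |(((c : ℤ) - (b : ℤ) : ℤ) : ℝ)|) ^ (-q) = (1 + |(c:ℝ) - (b:ℝ)|) ^ (-q) := by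
    intro c; push_cast; ring_nf
  have hST : Summable (fun c : ℕ+ => (1 + |(c:ℝ) - (b:ℝ)|) ^ (-q)) :=
    (hSZ.comp_injective hinj).congr (fun c => hcompeq c)
  have hTZ : (∑' c : ℕ+, (1 + |(c:ℝ) - (b:ℝ)|) ^ (-q)) ≤ Z :=
    Summable.tsum_le_tsum_of_inj _ hinj
      (fun k _ => Real.rpow_nonneg (by positivity) _)
      (fun c => le_of_eq (hcompeq c).symm) hST hSZ
  set gab : ℝ := Real.sqrt (min (a : ℝ) (b : ℝ)) /
      (Real.sqrt (min (a : ℝ) (b : ℝ)) + |(a : ℝ) - (b : ℝ)|) with hgab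
  have hgab0 : 0 ≤ gab := div_nonneg (Real.sqrt_nonneg _) (by positivity)
  set K : ℝ := MA * MB * ((a : ℝ) * (b : ℝ)) ^ (-β) * gab ^ (s / 2) with hK
  have hK0 : 0 ≤ K := by
    apply mul_nonneg
    · exact mul_nonneg (mul_nonneg hMA hMB) (Real.rpow_nonneg (by positivity) _)
    · exact Real.rpow_nonneg hgab0 _
  have hAMGM : ∀ c : ℕ+, ((c:ℝ)) ^ (-β) * ((c:ℝ)) ^ (-β) * (1 + |(c:ℝ) - (b:ℝ)|)⁻¹ ≤
      ((c:ℝ)) ^ (-(4:ℝ)) + (1 + |(c:ℝ) - (b:ℝ)|) ^ (-q) := by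
    intro c
    have hc1 : (1:ℝ) ≤ (c:ℝ) := by exact_mod_cast c.one_le
    have hcpos : (0:ℝ) < (c:ℝ) := by linarith
    set y : ℝ := 1 + |(c:ℝ) - (b:ℝ)| with hy
    have hy1 : (1:ℝ) ≤ y := le_add_of_nonneg_right (abs_nonneg _)
    have hy0 : (0:ℝ) < y := by linarith
    have hu : (0:ℝ) ≤ ((c:ℝ)) ^ (-(4:ℝ)) := Real.rpow_nonneg (by positivity) _
    have hv : (0:ℝ) ≤ y ^ (-q) := Real.rpow_nonneg (by linarith) _
    have e1 : (((c:ℝ)) ^ (-(4:ℝ))) ^ (β / 2) = ((c:ℝ)) ^ (-β) * ((c:ℝ)) ^ (-β) := by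
      rw [← Real.rpow_mul hcpos.le, ← Real.rpow_add hcpos]
      congr 1; ring
    have e2 : (y ^ (-q)) ^ (1 - β / 2) = y⁻¹ := by
      rw [← Real.rpow_mul hy0.le]
      have hmul : q * (1 - β / 2) = 1 := by
        rw [hq]; exact inv_mul_cancel₀ (ne_of_gt h1θ)
      have h : -q * (1 - β / 2) = -1 := by rw [neg_mul, hmul]
      rw [h, Real.rpow_neg_one]
    have hg := Real.geom_mean_le_arith_mean2_weighted
      (by linarith : (0:ℝ) ≤ β / 2) (by linarith : (0:ℝ) ≤ 1 - β / 2) hu hv (by ring)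
    rw [e1, e2] at hg
    have h2 : β / 2 * ((c:ℝ)) ^ (-(4:ℝ)) + (1 - β / 2) * y ^ (-q) ≤
        ((c:ℝ)) ^ (-(4:ℝ)) + y ^ (-q) := by
      have t1 : 0 ≤ (1 - β / 2) * ((c:ℝ)) ^ (-(4:ℝ)) := mul_nonneg h1θ.le hu
      have t2 : 0 ≤ β / 2 * y ^ (-q) := mul_nonneg (by linarith) hv
      linarith
    exact hg.trans h2
  have hptw : ∀ c : ℕ+, ‖A a c * B c b‖ ≤
      K * (((c:ℝ)) ^ (-(4:ℝ)) + (1 + |(c:ℝ) - (b:ℝ)|) ^ (-q)) := by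
    intro c
    have hc1 : (1:ℝ) ≤ (c:ℝ) := by exact_mod_cast c.one_le
    set gac : ℝ := Real.sqrt (min (a : ℝ) (c : ℝ)) /
        (Real.sqrt (min (a : ℝ) (c : ℝ)) + |(a : ℝ) - (c : ℝ)|) with hgac
    set gcb : ℝ := Real.sqrt (min (c : ℝ) (b : ℝ)) /
        (Real.sqrt (min (c : ℝ) (b : ℝ)) + |(c : ℝ) - (b : ℝ)|) with hgcb
    have hgac0 : 0 ≤ gac := div_nonneg (Real.sqrt_nonneg _) (by positivity)
    have hgcb0 : 0 ≤ gcb := div_nonneg (Real.sqrt_nonneg _) (by positivity)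
    have hgprod : gac ^ (s / 2) * gcb ^ (s / 2) ≤ gab ^ (s / 2) := by
      rw [← Real.mul_rpow hgac0 hgcb0]
      exact Real.rpow_le_rpow (mul_nonneg hgac0 hgcb0) (gmul ha1 hb1 hc1) (by linarith)
    have eac : ((a:ℝ) * (c:ℝ)) ^ (-β) = (a:ℝ) ^ (-β) * (c:ℝ) ^ (-β) :=
      Real.mul_rpow (by positivity) (by positivity)
    have ecb : ((c:ℝ) * (b:ℝ)) ^ (-β) = (c:ℝ) ^ (-β) * (b:ℝ) ^ (-β) :=
      Real.mul_rpow (by positivity) (by positivity)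
    have eab : ((a:ℝ) * (b:ℝ)) ^ (-β) = (a:ℝ) ^ (-β) * (b:ℝ) ^ (-β) :=
      Real.mul_rpow (by positivity) (by positivity)
    have hfac : (0:ℝ) ≤ MA * MB * ((a:ℝ) * (b:ℝ)) ^ (-β) :=
      mul_nonneg (mul_nonneg hMA hMB) (Real.rpow_nonneg (by positivity) _)
    calc ‖A a c * B c b‖ = ‖A a c‖ * ‖B c b‖ := norm_mul _ _
      _ ≤ (MA * ((a:ℝ) * (c:ℝ)) ^ (-β) * gac ^ (s / 2)) *
          (MB * ((c:ℝ) * (b:ℝ)) ^ (-β) * (1 + |(c:ℝ) - (b:ℝ)|)⁻¹ * gcb ^ (s / 2)) := by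
          apply mul_le_mul (hA a c) (hB c b) (norm_nonneg _)
          positivity
      _ = (MA * MB * ((a:ℝ) * (b:ℝ)) ^ (-β)) *
          (((c:ℝ)) ^ (-β) * ((c:ℝ)) ^ (-β) * (1 + |(c:ℝ) - (b:ℝ)|)⁻¹) *
          (gac ^ (s / 2) * gcb ^ (s / 2)) := by
          rw [eac, ecb, eab]; ring
      _ ≤ (MA * MB * ((a:ℝ) * (b:ℝ)) ^ (-β)) *
          (((c:ℝ)) ^ (-(4:ℝ)) + (1 + |(c:ℝ) - (b:ℝ)|) ^ (-q)) * (gab ^ (s / 2)) := by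
          have h1 := mul_le_mul_of_nonneg_left (hAMGM c) hfac
          have h2 : 0 ≤ gac ^ (s / 2) * gcb ^ (s / 2) :=
            mul_nonneg (Real.rpow_nonneg hgac0 _) (Real.rpow_nonneg hgcb0 _)
          have h3 : 0 ≤ (MA * MB * ((a:ℝ) * (b:ℝ)) ^ (-β)) *
              (((c:ℝ)) ^ (-(4:ℝ)) + (1 + |(c:ℝ) - (b:ℝ)|) ^ (-q)) :=
            mul_nonneg hfac (add_nonneg (Real.rpow_nonneg (by positivity) _)
              (Real.rpow_nonneg (by positivity) _))
          exact mul_le_mul h1 hgprod h2 h3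
      _ = K * (((c:ℝ)) ^ (-(4:ℝ)) + (1 + |(c:ℝ) - (b:ℝ)|) ^ (-q)) := by
          rw [hK]; ring
  have hmaj : Summable (fun c : ℕ+ =>
      K * (((c:ℝ)) ^ (-(4:ℝ)) + (1 + |(c:ℝ) - (b:ℝ)|) ^ (-q))) :=
    (hS4.add hST).mul_left K
  have hnorm : Summable (fun c : ℕ+ => ‖A a c * B c b‖) :=
    Summable.of_nonneg_of_le (fun c => norm_nonneg _) hptw hmaj
  calc ‖∑' c : ℕ+, A a c * B c b‖ ≤ ∑' c : ℕ+, ‖A a c * B c b‖ :=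
        norm_tsum_le_tsum_norm hnorm
    _ ≤ ∑' c : ℕ+, K * (((c:ℝ)) ^ (-(4:ℝ)) + (1 + |(c:ℝ) - (b:ℝ)|) ^ (-q)) :=
        Summable.tsum_le_tsum hptw hnorm hmaj
    _ = K * (S + ∑' c : ℕ+, (1 + |(c:ℝ) - (b:ℝ)|) ^ (-q)) := by
        rw [tsum_mul_left, Summable.tsum_add hS4 hST]
    _ ≤ K * (S + Z + 1) := by
        apply mul_le_mul_of_nonneg_left _ hK0
        linarith
    _ = (S + Z + 1) * MA * MB * ((a:ℝ) * (b:ℝ)) ^ (-β) * gab ^ (s / 2) := by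
        rw [hK]; ring
end

section
/- Let A and B be infinite matrices indexed by positive integers satisfying |A_a^b| ≤ M_A (ab)^{-β}(1+|a-b|)^{-1} g(a,b)^{s/2} and similarly for B with constant M_B, where g(a,b) = √(min(a,b))/(√(min(a,b)) + |a-b|), β ∈ (0,1], s ≥ 0. Then |(AB)_a^b| ≤ C M_A M_B (ab)^{-β}(1+|a-b|)^{-1} g(a,b)^{s/2} with C depending only on β and s. -/
open Real

namespace Stmt10Aux

/-- `F x y = 1 + |x-y|/√(min x y)` is the reciprocal of `g`. -/
noncomputable def F (x y : ℝ) : ℝ := 1 + |x - y| / Real.sqrt (min x y)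

noncomputable def G (x y : ℝ) : ℝ :=
  Real.sqrt (min x y) / (Real.sqrt (min x y) + |x - y|)

lemma F_symm (x y : ℝ) : F x y = F y x := by
  unfold F; rw [min_comm, abs_sub_comm]

lemma one_le_F (x y : ℝ) : 1 ≤ F x y := by
  have : 0 ≤ |x - y| / Real.sqrt (min x y) :=
    div_nonneg (abs_nonneg _) (Real.sqrt_nonneg _)
  unfold F; linarith

lemma F_pos (x y : ℝ) : 0 < F x y := lt_of_lt_of_le one_pos (one_le_F x y)

lemma G_eq_inv_F {x y : ℝ} (hx : 0 < x) (hy : 0 < y) : G x y = (F x y)⁻¹ := by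
  have hm : 0 < Real.sqrt (min x y) := Real.sqrt_pos.2 (lt_min hx hy)
  unfold F G
  rw [one_add_div hm.ne', inv_div]

lemma G_nonneg (x y : ℝ) : 0 ≤ G x y :=
  div_nonneg (Real.sqrt_nonneg _) (add_nonneg (Real.sqrt_nonneg _) (abs_nonneg _))

lemma one_le_sqrt {a : ℝ} (ha : 1 ≤ a) : 1 ≤ Real.sqrt a := by
  rw [show (1:ℝ) = Real.sqrt 1 by simp]
  exact Real.sqrt_le_sqrt ha

lemma sqrt_le_add {a c : ℝ} (ha : 1 ≤ a) (hac : a ≤ c) :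
    Real.sqrt c ≤ Real.sqrt a + (c - a) := by
  have h0a : (0:ℝ) ≤ a := by linarith
  have h0c : (0:ℝ) ≤ c := by linarith
  have hsa := Real.sq_sqrt h0a
  have hsc := Real.sq_sqrt h0c
  have hsa1 : 1 ≤ Real.sqrt a := one_le_sqrt ha
  have hscn := Real.sqrt_nonneg c
  nlinarith [Real.sqrt_nonneg a]

lemma F_submul_aux {a b c : ℝ} (ha : 1 ≤ a) (hc : 1 ≤ c) (hab : a ≤ b) :
    F a b ≤ F a c * F c b := by
  have hb : 1 ≤ b := le_trans ha hab
  have hsa : 0 < Real.sqrt a := Real.sqrt_pos.2 (by linarith)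
  have hsc : 0 < Real.sqrt c := Real.sqrt_pos.2 (by linarith)
  have hsa1 : 1 ≤ Real.sqrt a := one_le_sqrt ha
  rcases le_total c a with h1 | h1
  · -- c ≤ a ≤ b
    have hsca : Real.sqrt c ≤ Real.sqrt a := Real.sqrt_le_sqrt h1
    have h2 : F a b ≤ F c b := by
      unfold F
      rw [min_eq_left hab, min_eq_left (le_trans h1 hab), abs_sub_comm a b,
        abs_sub_comm c b, abs_of_nonneg (by linarith : (0:ℝ) ≤ b - a),
        abs_of_nonneg (by linarith : (0:ℝ) ≤ b - c)]
      have : (b - a) / Real.sqrt a ≤ (b - c) / Real.sqrt c :=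
        div_le_div₀ (by linarith) (by linarith) hsc hsca
      linarith
    calc F a b ≤ F c b := h2
      _ ≤ F a c * F c b := le_mul_of_one_le_left (F_pos _ _).le (one_le_F _ _)
  · rcases le_total c b with h2 | h2
    · -- a ≤ c ≤ b
      unfold F
      rw [min_eq_left hab, min_eq_left h1, min_eq_left h2, abs_sub_comm a b,
        abs_sub_comm a c, abs_sub_comm c b,
        abs_of_nonneg (by linarith : (0:ℝ) ≤ b - a),
        abs_of_nonneg (by linarith : (0:ℝ) ≤ c - a),
        abs_of_nonneg (by linarith : (0:ℝ) ≤ b - c)]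
      have key : Real.sqrt c ≤ Real.sqrt a + (c - a) := sqrt_le_add ha h1
      have hkey2 : (b - c) * Real.sqrt c ≤ (b - c) * (Real.sqrt a + (c - a)) :=
        mul_le_mul_of_nonneg_left key (by linarith)
      rw [one_add_div hsa.ne', one_add_div hsa.ne', one_add_div hsc.ne',
        div_mul_div_comm, div_le_div_iff₀ hsa (by positivity)]
      nlinarith [hkey2, hsa.le, hsc.le, mul_pos hsa hsc]
    · -- a ≤ b ≤ c
      have h3 : F a b ≤ F a c := by
        unfold F
        rw [min_eq_left hab, min_eq_left (le_trans hab h2), abs_sub_comm a b,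
          abs_sub_comm a c, abs_of_nonneg (by linarith : (0:ℝ) ≤ b - a),
          abs_of_nonneg (by linarith : (0:ℝ) ≤ c - a)]
        have : (b - a) / Real.sqrt a ≤ (c - a) / Real.sqrt a :=
          by gcongr
        linarith
      calc F a b ≤ F a c := h3
        _ ≤ F a c * F c b := le_mul_of_one_le_right (F_pos _ _).le (one_le_F _ _)


lemma F_submul {a b c : ℝ} (ha : 1 ≤ a) (hb : 1 ≤ b) (hc : 1 ≤ c) :
    F a b ≤ F a c * F c b := by
  rcases le_total a b with h | h
  · exact F_submul_aux ha hc h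
  · calc F a b = F b a := F_symm a b
      _ ≤ F b c * F c a := F_submul_aux hb hc h
      _ = F a c * F c b := by rw [F_symm b c, F_symm c a]; ring

lemma G_submul {a b c : ℝ} (ha : 1 ≤ a) (hb : 1 ≤ b) (hc : 1 ≤ c) :
    G a c * G c b ≤ G a b := by
  have ha0 : (0:ℝ) < a := by linarith
  have hb0 : (0:ℝ) < b := by linarith
  have hc0 : (0:ℝ) < c := by linarith
  rw [G_eq_inv_F ha0 hc0, G_eq_inv_F hc0 hb0, G_eq_inv_F ha0 hb0, ← mul_inv]
  exact inv_anti₀ (F_pos a b) (F_submul ha hb hc)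

lemma G_le_one {x y : ℝ} (hx : 0 < x) (hy : 0 < y) : G x y ≤ 1 := by
  rw [G_eq_inv_F hx hy]
  exact inv_le_one_of_one_le₀ (one_le_F x y)

/-- the comparison series over `ℤ`. -/
noncomputable def gZ (t : ℝ) : ℤ → ℝ := fun k => (1 + |(k : ℝ)|) ^ (-(1 + t))

lemma gZ_nonneg (t : ℝ) (k : ℤ) : 0 ≤ gZ t k :=
  Real.rpow_nonneg (by positivity) _

lemma summable_gZ {t : ℝ} (ht : 0 < t) : Summable (gZ t) := by
  have h : Summable (fun n : ℕ => (n : ℝ) ^ (-(1 + t))) :=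
    Real.summable_nat_rpow.2 (by linarith)
  apply Summable.of_nat_of_neg_add_one
  · have h1 := (summable_nat_add_iff 1).2 h
    apply h1.congr
    intro n
    unfold gZ
    push_cast
    rw [abs_of_nonneg (by positivity : (0:ℝ) ≤ (n:ℝ))]
    ring_nf
  · have h2 := (summable_nat_add_iff 2).2 h
    apply h2.congr
    intro n
    unfold gZ
    push_cast
    rw [abs_of_nonpos (by push_cast; linarith [Nat.cast_nonneg (α := ℝ) n] : (-((n:ℝ)+1) : ℝ) ≤ 0)]
    ring_nf

noncomputable def S (t : ℝ) : ℝ := ∑' k : ℤ, gZ t k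

lemma S_nonneg (t : ℝ) : 0 ≤ S t := tsum_nonneg (gZ_nonneg t)

lemma shift_inj (j : ℤ) : Function.Injective (fun c : ℕ+ => (c : ℤ) - j) := by
  intro x y h
  simp only at h
  have hxy : (x : ℤ) = (y : ℤ) := by linarith
  have : (x : ℕ) = (y : ℕ) := by exact_mod_cast hxy
  exact PNat.coe_injective this

lemma shift_eq (t : ℝ) (j : ℤ) (c : ℕ+) :
    (1 + |(c : ℝ) - (j : ℝ)|) ^ (-(1 + t)) = gZ t ((c : ℤ) - j) := by
  unfold gZ
  push_cast
  ring_nf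

lemma summable_shift {t : ℝ} (ht : 0 < t) (j : ℤ) :
    Summable (fun c : ℕ+ => (1 + |(c : ℝ) - (j : ℝ)|) ^ (-(1 + t))) := by
  have := (summable_gZ ht).comp_injective (shift_inj j)
  exact this.congr fun c => (shift_eq t j c).symm

lemma tsum_shift_le {t : ℝ} (ht : 0 < t) (j : ℤ) :
    ∑' c : ℕ+, (1 + |(c : ℝ) - (j : ℝ)|) ^ (-(1 + t)) ≤ S t := by
  apply Summable.tsum_le_tsum_of_inj (fun c : ℕ+ => (c : ℤ) - j) (shift_inj j)
    (fun k _ => gZ_nonneg t k) (fun c => le_of_eq (shift_eq t j c))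
    (summable_shift ht j) (summable_gZ ht)

/-- the elementary splitting of the product of two decay factors. -/
lemma Dsplit (x y z : ℝ) :
    (1 + |x - y|)⁻¹ * (1 + |y - z|)⁻¹ ≤
      2 * (1 + |x - z|)⁻¹ * ((1 + |x - y|)⁻¹ + (1 + |y - z|)⁻¹) := by
  have hp : (0:ℝ) < 1 + |x - y| := by positivity
  have hq : (0:ℝ) < 1 + |y - z| := by positivity
  have hr : (0:ℝ) < 1 + |x - z| := by positivity
  have htri : |x - z| ≤ |x - y| + |y - z| := abs_sub_le x y z
  rw [show 2 * (1 + |x - z|)⁻¹ * ((1 + |x - y|)⁻¹ + (1 + |y - z|)⁻¹)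
      = (2 * ((1 + |x - y|) + (1 + |y - z|))) / ((1 + |x - z|) * ((1 + |x - y|) * (1 + |y - z|)))
      from by field_simp; ring,
    show (1 + |x - y|)⁻¹ * (1 + |y - z|)⁻¹
      = (1 + |x - z|) / ((1 + |x - z|) * ((1 + |x - y|) * (1 + |y - z|))) from by field_simp]
  apply div_le_div_of_nonneg_right ?h ?hd
  case hd => positivity
  case h => linarith

/-- `c^{-t} d^{-1} ≤ c^{-(1+t)} + d^{-(1+t)}` for `c, d ≥ 1`. -/
lemma two_term {c d t : ℝ} (hc : 1 ≤ c) (hd : 1 ≤ d) (ht : 0 ≤ t) :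
    c ^ (-t) * d⁻¹ ≤ c ^ (-(1 + t)) + d ^ (-(1 + t)) := by
  have hc0 : (0:ℝ) < c := by linarith
  have hd0 : (0:ℝ) < d := by linarith
  rcases le_total c d with h | h
  · have h1 : d⁻¹ ≤ c⁻¹ := inv_anti₀ hc0 h
    calc c ^ (-t) * d⁻¹ ≤ c ^ (-t) * c⁻¹ :=
          mul_le_mul_of_nonneg_left h1 (Real.rpow_nonneg hc0.le _)
      _ = c ^ (-(1 + t)) := by
          rw [← Real.rpow_neg_one c, ← Real.rpow_add hc0]; ring_nf
      _ ≤ c ^ (-(1 + t)) + d ^ (-(1 + t)) :=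
          le_add_of_nonneg_right (Real.rpow_nonneg hd0.le _)
  · have h1 : c ^ (-t) ≤ d ^ (-t) :=
      Real.rpow_le_rpow_of_nonpos hd0 h (by linarith)
    calc c ^ (-t) * d⁻¹ ≤ d ^ (-t) * d⁻¹ :=
          mul_le_mul_of_nonneg_right h1 (by positivity)
      _ = d ^ (-(1 + t)) := by
          rw [← Real.rpow_neg_one d, ← Real.rpow_add hd0]; ring_nf
      _ ≤ c ^ (-(1 + t)) + d ^ (-(1 + t)) :=
          le_add_of_nonneg_left (Real.rpow_nonneg hc0.le _)


/-- combined kernel estimate. -/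
lemma kernel {x y z t : ℝ} (hx : 1 ≤ x) (hy : 1 ≤ y) (hz : 1 ≤ z) (ht : 0 < t) :
    z ^ (-t) * ((1 + |x - z|)⁻¹ * (1 + |z - y|)⁻¹) ≤
    2 * (1 + |x - y|)⁻¹ *
      (2 * z ^ (-(1 + t)) + (1 + |x - z|) ^ (-(1 + t)) + (1 + |z - y|) ^ (-(1 + t))) := by
  have hz0 : 0 ≤ z ^ (-t) := Real.rpow_nonneg (by linarith) _
  have h3 := two_term hz (by simp [abs_nonneg] : (1:ℝ) ≤ 1 + |x - z|) ht.le
  have h4 := two_term hz (by simp [abs_nonneg] : (1:ℝ) ≤ 1 + |z - y|) ht.le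
  calc z ^ (-t) * ((1 + |x - z|)⁻¹ * (1 + |z - y|)⁻¹)
      ≤ z ^ (-t) * (2 * (1 + |x - y|)⁻¹ * ((1 + |x - z|)⁻¹ + (1 + |z - y|)⁻¹)) :=
        mul_le_mul_of_nonneg_left (Dsplit x z y) hz0
    _ = 2 * (1 + |x - y|)⁻¹ *
          (z ^ (-t) * (1 + |x - z|)⁻¹ + z ^ (-t) * (1 + |z - y|)⁻¹) := by ring
    _ ≤ 2 * (1 + |x - y|)⁻¹ *
          ((z ^ (-(1 + t)) + (1 + |x - z|) ^ (-(1 + t))) +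
           (z ^ (-(1 + t)) + (1 + |z - y|) ^ (-(1 + t)))) :=
        mul_le_mul_of_nonneg_left (add_le_add h3 h4) (by positivity)
    _ = 2 * (1 + |x - y|)⁻¹ *
          (2 * z ^ (-(1 + t)) + (1 + |x - z|) ^ (-(1 + t)) + (1 + |z - y|) ^ (-(1 + t))) := by
        ring

end Stmt10Aux


/-- Lemma 2.3 (ii), scalar version: the class of matrices with
`|A_a^b| ≤ M (ab)^{-β}(1+|a-b|)^{-1} g(a,b)^{s/2}` (where
`g(a,b) = √min(a,b)/(√min(a,b)+|a-b|)`) is stable under products. -/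
theorem stmt_10 (s β : ℝ) (hs : 0 ≤ s) (hβ0 : 0 < β) (hβ1 : β ≤ 1) :
    ∃ C > 0, ∀ (MA MB : ℝ), 0 ≤ MA → 0 ≤ MB →
      ∀ A B : ℕ+ → ℕ+ → ℂ,
      (∀ a b : ℕ+, ‖A a b‖ ≤ MA * ((a : ℝ) * (b : ℝ)) ^ (-β) * (1 + |(a : ℝ) - (b : ℝ)|)⁻¹ *
        (Real.sqrt (min (a : ℝ) (b : ℝ)) /
          (Real.sqrt (min (a : ℝ) (b : ℝ)) + |(a : ℝ) - (b : ℝ)|)) ^ (s / 2)) →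
      (∀ a b : ℕ+, ‖B a b‖ ≤ MB * ((a : ℝ) * (b : ℝ)) ^ (-β) * (1 + |(a : ℝ) - (b : ℝ)|)⁻¹ *
        (Real.sqrt (min (a : ℝ) (b : ℝ)) /
          (Real.sqrt (min (a : ℝ) (b : ℝ)) + |(a : ℝ) - (b : ℝ)|)) ^ (s / 2)) →
      ∀ a b : ℕ+, ‖∑' c : ℕ+, A a c * B c b‖ ≤
        C * MA * MB * ((a : ℝ) * (b : ℝ)) ^ (-β) * (1 + |(a : ℝ) - (b : ℝ)|)⁻¹ *
          (Real.sqrt (min (a : ℝ) (b : ℝ)) /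
            (Real.sqrt (min (a : ℝ) (b : ℝ)) + |(a : ℝ) - (b : ℝ)|)) ^ (s / 2) := by
  have ht : (0:ℝ) < 2 * β := by linarith
  have hSnn := Stmt10Aux.S_nonneg (2 * β)
  refine ⟨8 * Stmt10Aux.S (2 * β) + 1, by linarith, ?_⟩
  intro MA MB hMA hMB A B hA hB a b
  have hGdef : ∀ x y : ℝ,
      Real.sqrt (min x y) / (Real.sqrt (min x y) + |x - y|) = Stmt10Aux.G x y :=
    fun _ _ => rfl
  simp only [hGdef] at hA hB ⊢
  have hone : ∀ c : ℕ+, (1:ℝ) ≤ (c : ℝ) := fun c => by exact_mod_cast c.one_le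
  -- the comparison function
  set R : ℕ+ → ℝ := fun c =>
    2 * (c : ℝ) ^ (-(1 + 2 * β)) + (1 + |(a : ℝ) - (c : ℝ)|) ^ (-(1 + 2 * β)) +
      (1 + |(c : ℝ) - (b : ℝ)|) ^ (-(1 + 2 * β)) with hR
  -- the constant prefactor
  set Q : ℝ := MA * MB * ((a : ℝ) * (b : ℝ)) ^ (-β) * (Stmt10Aux.G (a : ℝ) (b : ℝ)) ^ (s / 2) *
    (2 * (1 + |(a : ℝ) - (b : ℝ)|)⁻¹) with hQ
  have hQ0 : 0 ≤ Q := by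
    rw [hQ]
    apply mul_nonneg
    apply mul_nonneg
    apply mul_nonneg (mul_nonneg hMA hMB) (Real.rpow_nonneg (by positivity) _)
    · exact Real.rpow_nonneg (Stmt10Aux.G_nonneg _ _) _
    · positivity
  -- pointwise bound
  have hpt : ∀ c : ℕ+, ‖A a c * B c b‖ ≤ Q * R c := by
    intro c
    have h1a := hone a
    have h1b := hone b
    have h1c := hone c
    have hc0 : (0:ℝ) < (c : ℝ) := by linarith
    have hwA : 0 ≤ MA * ((a : ℝ) * (c : ℝ)) ^ (-β) * (1 + |(a : ℝ) - (c : ℝ)|)⁻¹ *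
        (Stmt10Aux.G (a : ℝ) (c : ℝ)) ^ (s / 2) := by
      apply mul_nonneg
      apply mul_nonneg (mul_nonneg hMA (Real.rpow_nonneg (by positivity) _)) (by positivity)
      exact Real.rpow_nonneg (Stmt10Aux.G_nonneg _ _) _
    have hrpoweq : ((a : ℝ) * (c : ℝ)) ^ (-β) * (((c : ℝ) * (b : ℝ)) ^ (-β)) =
        ((a : ℝ) * (b : ℝ)) ^ (-β) * (c : ℝ) ^ (-(2 * β)) := by
      rw [← Real.mul_rpow (by positivity) (by positivity),
        show ((a : ℝ) * (c : ℝ)) * ((c : ℝ) * (b : ℝ))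
            = ((a : ℝ) * (b : ℝ)) * ((c : ℝ) * (c : ℝ)) from by ring,
        Real.mul_rpow (by positivity) (by positivity),
        Real.mul_rpow hc0.le hc0.le, ← Real.rpow_add hc0,
        show -β + -β = -(2 * β) from by ring]
    have hGle : (Stmt10Aux.G (a : ℝ) (c : ℝ)) ^ (s / 2) *
        (Stmt10Aux.G (c : ℝ) (b : ℝ)) ^ (s / 2) ≤ (Stmt10Aux.G (a : ℝ) (b : ℝ)) ^ (s / 2) := by
      rw [← Real.mul_rpow (Stmt10Aux.G_nonneg _ _) (Stmt10Aux.G_nonneg _ _)]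
      exact Real.rpow_le_rpow
        (mul_nonneg (Stmt10Aux.G_nonneg _ _) (Stmt10Aux.G_nonneg _ _))
        (Stmt10Aux.G_submul h1a h1b h1c) (by linarith)
    have hker := Stmt10Aux.kernel (x := (a : ℝ)) (y := (b : ℝ)) (z := (c : ℝ))
      h1a h1b h1c ht
    calc ‖A a c * B c b‖ = ‖A a c‖ * ‖B c b‖ := norm_mul _ _
      _ ≤ (MA * ((a : ℝ) * (c : ℝ)) ^ (-β) * (1 + |(a : ℝ) - (c : ℝ)|)⁻¹ *
            (Stmt10Aux.G (a : ℝ) (c : ℝ)) ^ (s / 2)) *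
          (MB * ((c : ℝ) * (b : ℝ)) ^ (-β) * (1 + |(c : ℝ) - (b : ℝ)|)⁻¹ *
            (Stmt10Aux.G (c : ℝ) (b : ℝ)) ^ (s / 2)) :=
        mul_le_mul (hA a c) (hB c b) (norm_nonneg _) hwA
      _ = (MA * MB) * (((a : ℝ) * (c : ℝ)) ^ (-β) * (((c : ℝ) * (b : ℝ)) ^ (-β))) *
          ((Stmt10Aux.G (a : ℝ) (c : ℝ)) ^ (s / 2) * (Stmt10Aux.G (c : ℝ) (b : ℝ)) ^ (s / 2)) *
          ((1 + |(a : ℝ) - (c : ℝ)|)⁻¹ * (1 + |(c : ℝ) - (b : ℝ)|)⁻¹) := by ring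
      _ = ((MA * MB) * (((a : ℝ) * (b : ℝ)) ^ (-β)) *
            ((1 + |(a : ℝ) - (c : ℝ)|)⁻¹ * (1 + |(c : ℝ) - (b : ℝ)|)⁻¹) * (c : ℝ) ^ (-(2 * β))) *
          ((Stmt10Aux.G (a : ℝ) (c : ℝ)) ^ (s / 2) * (Stmt10Aux.G (c : ℝ) (b : ℝ)) ^ (s / 2)) := by
        rw [hrpoweq]; ring
      _ ≤ ((MA * MB) * (((a : ℝ) * (b : ℝ)) ^ (-β)) *
            ((1 + |(a : ℝ) - (c : ℝ)|)⁻¹ * (1 + |(c : ℝ) - (b : ℝ)|)⁻¹) * (c : ℝ) ^ (-(2 * β))) *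
          (Stmt10Aux.G (a : ℝ) (b : ℝ)) ^ (s / 2) := by
        apply mul_le_mul_of_nonneg_left hGle
        apply mul_nonneg
        apply mul_nonneg (mul_nonneg (mul_nonneg hMA hMB) (Real.rpow_nonneg (by positivity) _))
          (by positivity)
        exact Real.rpow_nonneg hc0.le _
      _ = ((MA * MB) * (((a : ℝ) * (b : ℝ)) ^ (-β)) * (Stmt10Aux.G (a : ℝ) (b : ℝ)) ^ (s / 2)) *
          ((c : ℝ) ^ (-(2 * β)) *
            ((1 + |(a : ℝ) - (c : ℝ)|)⁻¹ * (1 + |(c : ℝ) - (b : ℝ)|)⁻¹)) := by ring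
      _ ≤ ((MA * MB) * (((a : ℝ) * (b : ℝ)) ^ (-β)) * (Stmt10Aux.G (a : ℝ) (b : ℝ)) ^ (s / 2)) *
          (2 * (1 + |(a : ℝ) - (b : ℝ)|)⁻¹ *
            (2 * (c : ℝ) ^ (-(1 + 2 * β)) + (1 + |(a : ℝ) - (c : ℝ)|) ^ (-(1 + 2 * β)) +
              (1 + |(c : ℝ) - (b : ℝ)|) ^ (-(1 + 2 * β)))) := by
        apply mul_le_mul_of_nonneg_left hker
        apply mul_nonneg (mul_nonneg (mul_nonneg hMA hMB) (Real.rpow_nonneg (by positivity) _))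
        exact Real.rpow_nonneg (Stmt10Aux.G_nonneg _ _) _
      _ = Q * R c := by rw [hQ, hR]; ring
  -- summability of the comparison function
  have hsum1 : Summable (fun c : ℕ+ => (c : ℝ) ^ (-(1 + 2 * β))) := by
    apply (Stmt10Aux.summable_shift ht 1).congr
    intro c
    congr 1
    rw [show ((1:ℤ):ℝ) = 1 by norm_num, abs_of_nonneg (by linarith [hone c])]
    ring
  have hsum2 : Summable (fun c : ℕ+ => (1 + |(a : ℝ) - (c : ℝ)|) ^ (-(1 + 2 * β))) := by
    apply (Stmt10Aux.summable_shift ht ((a : ℕ) : ℤ)).congr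
    intro c
    congr 2
    rw [abs_sub_comm]
    congr 1
  have hsum3 : Summable (fun c : ℕ+ => (1 + |(c : ℝ) - (b : ℝ)|) ^ (-(1 + 2 * β))) := by
    apply (Stmt10Aux.summable_shift ht ((b : ℕ) : ℤ)).congr
    intro c
    congr 2
  have hRsum : Summable R := by
    rw [hR]
    exact ((hsum1.mul_left 2).add hsum2).add hsum3
  have htsum1 : ∑' c : ℕ+, (c : ℝ) ^ (-(1 + 2 * β)) ≤ Stmt10Aux.S (2 * β) := by
    rw [show (∑' c : ℕ+, (c : ℝ) ^ (-(1 + 2 * β)))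
        = ∑' c : ℕ+, (1 + |(c : ℝ) - ((1:ℤ) : ℝ)|) ^ (-(1 + 2 * β)) from
      tsum_congr fun c => by
        congr 1
        rw [show ((1:ℤ):ℝ) = 1 by norm_num, abs_of_nonneg (by linarith [hone c])]
        ring]
    exact Stmt10Aux.tsum_shift_le ht 1
  have htsum2 : ∑' c : ℕ+, (1 + |(a : ℝ) - (c : ℝ)|) ^ (-(1 + 2 * β)) ≤ Stmt10Aux.S (2 * β) := by
    rw [show (∑' c : ℕ+, (1 + |(a : ℝ) - (c : ℝ)|) ^ (-(1 + 2 * β)))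
        = ∑' c : ℕ+, (1 + |(c : ℝ) - (((a : ℕ) : ℤ) : ℝ)|) ^ (-(1 + 2 * β)) from
      tsum_congr fun c => by
        congr 2
        rw [abs_sub_comm]
        congr 1]
    exact Stmt10Aux.tsum_shift_le ht ((a : ℕ) : ℤ)
  have htsum3 : ∑' c : ℕ+, (1 + |(c : ℝ) - (b : ℝ)|) ^ (-(1 + 2 * β)) ≤ Stmt10Aux.S (2 * β) := by
    rw [show (∑' c : ℕ+, (1 + |(c : ℝ) - (b : ℝ)|) ^ (-(1 + 2 * β)))
        = ∑' c : ℕ+, (1 + |(c : ℝ) - (((b : ℕ) : ℤ) : ℝ)|) ^ (-(1 + 2 * β)) from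
      tsum_congr fun c => by
        congr 2]
    exact Stmt10Aux.tsum_shift_le ht ((b : ℕ) : ℤ)
  have htsumR : ∑' c, R c ≤ 4 * Stmt10Aux.S (2 * β) := by
    rw [hR]
    rw [Summable.tsum_add ((hsum1.mul_left 2).add hsum2) hsum3,
      Summable.tsum_add (hsum1.mul_left 2) hsum2, tsum_mul_left]
    linarith
  have hnormsum : Summable (fun c : ℕ+ => ‖A a c * B c b‖) :=
    Summable.of_nonneg_of_le (fun c => norm_nonneg _) hpt (hRsum.mul_left Q)
  calc ‖∑' c : ℕ+, A a c * B c b‖ ≤ ∑' c : ℕ+, ‖A a c * B c b‖ :=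
        norm_tsum_le_tsum_norm hnormsum
    _ ≤ ∑' c : ℕ+, Q * R c := Summable.tsum_le_tsum hpt hnormsum (hRsum.mul_left Q)
    _ = Q * ∑' c, R c := tsum_mul_left
    _ ≤ Q * (4 * Stmt10Aux.S (2 * β)) := mul_le_mul_of_nonneg_left htsumR hQ0
    _ = (8 * Stmt10Aux.S (2 * β)) * (MA * MB * ((a : ℝ) * (b : ℝ)) ^ (-β) *
          (1 + |(a : ℝ) - (b : ℝ)|)⁻¹ * (Stmt10Aux.G (a : ℝ) (b : ℝ)) ^ (s / 2)) := by
        rw [hQ]; ring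
    _ ≤ (8 * Stmt10Aux.S (2 * β) + 1) * (MA * MB * ((a : ℝ) * (b : ℝ)) ^ (-β) *
          (1 + |(a : ℝ) - (b : ℝ)|)⁻¹ * (Stmt10Aux.G (a : ℝ) (b : ℝ)) ^ (s / 2)) := by
        apply mul_le_mul_of_nonneg_right (by linarith)
        apply mul_nonneg
        apply mul_nonneg (mul_nonneg (mul_nonneg hMA hMB) (Real.rpow_nonneg (by positivity) _))
          (by positivity)
        exact Real.rpow_nonneg (Stmt10Aux.G_nonneg _ _) _
    _ = (8 * Stmt10Aux.S (2 * β) + 1) * MA * MB * ((a : ℝ) * (b : ℝ)) ^ (-β) *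
          (1 + |(a : ℝ) - (b : ℝ)|)⁻¹ * (Stmt10Aux.G (a : ℝ) (b : ℝ)) ^ (s / 2) := by ring
end
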